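/- arXiv:2407.04758 — 3 statements merged into one kernel-verified Lean document; each statement's English description precedes it below -/
import Mathlib

section
/- (Pólya, recurrent case) Let d ∈ {1, 2} and let (Z_i)_{i≥1} be i.i.d. random variables uniformly distributed on the 2d unit coordinate vectors {±e_1, ..., ±e_d} of ℤ^d, and let X_n = Z_1 + ... + Z_n (X_0 = 0) be the simple random walk on ℤ^d. Then almost surely X_n = 0 for infinitely many n; i.e., the simple random walk on ℤ^d is recurrent for d = 1, 2. -/
open MeasureTheory ProbabilityTheory Finset
open scoped ENNReal

/-!
Write `u n = P (S n = 0)` and `f k` for the probability that the walk first returns to `0` at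
time `k`. Splitting at the first return gives the renewal identity
`u N = ∑ k ∈ [1, N], f k * u (N - k)`, so if the return probability `q = ∑ f k` were `< 1`,
then `∑ u n ≤ 1 / (1 - q) < ∞`. For the simple random walk, independence and symmetry give
`u (2n) = ∑ x, P (S n = x) ^ 2`; by Chebyshev, `S n` lies with probability `≥ 1/2` in a box of
`O(n^{d/2})` lattice points, so by Cauchy–Schwarz `u (2n) ≥ c / n` when `d ≤ 2` and `∑ u n = ∞`.
Hence the walk returns to its starting point almost surely, and since the increments after any
time `m` form a copy of the walk, it does so after every time `m`: it returns infinitely often.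
-/

namespace RandomWalk

section Increments

variable {Ω G : Type*} [MeasurableSpace G] {Z : ℕ → Ω → G}

lemma measurable_sum_of_mem [AddCommMonoid G] [MeasurableAdd₂ G] {ι : Type*} {S : Set ℕ}
    {s : Finset ι} {g : ι → ℕ} (hs : ∀ i ∈ s, g i ∈ S) :
    Measurable[⨆ i ∈ S, MeasurableSpace.comap (Z i) ‹_›] (fun ω ↦ ∑ i ∈ s, Z (g i) ω) :=
  Finset.measurable_sum s fun i hi ↦ by
    refine (comap_measurable (Z (g i))).mono ?_ le_rfl
    exact le_iSup₂ (f := fun j (_ : j ∈ S) ↦ MeasurableSpace.comap (Z j) ‹_›) (g i) (hs i hi)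

lemma measurableSet_setOf_sum_eq [AddCommMonoid G] [MeasurableSingletonClass G]
    [MeasurableAdd₂ G] (n : ℕ) (x : G) : MeasurableSet {z : ℕ → G | ∑ i ∈ range n, z i = x} :=
  (Finset.measurable_sum _ fun i _ ↦ measurable_pi_apply i) (measurableSet_singleton x)

variable [MeasurableSpace Ω] {P : Measure Ω}

lemma identDistrib_of_measure_eq [Countable G] [MeasurableSingletonClass G] {X Y : Ω → G}
    (hX : Measurable X) (hY : Measurable Y) (h : ∀ v, P {ω | X ω = v} = P {ω | Y ω = v}) :
    IdentDistrib X Y P P where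
  aemeasurable_fst := hX.aemeasurable
  aemeasurable_snd := hY.aemeasurable
  map_eq := Measure.ext_iff_singleton.2 fun v ↦ by
    rw [Measure.map_apply hX (measurableSet_singleton v),
      Measure.map_apply hY (measurableSet_singleton v)]
    exact h v

lemma iSup_comap_le (hmeas : ∀ i, Measurable (Z i)) (S : Set ℕ) :
    ⨆ i ∈ S, MeasurableSpace.comap (Z i) ‹_› ≤ ‹MeasurableSpace Ω› :=
  iSup₂_le fun i _ ↦ (hmeas i).comap_le

lemma identDistrib_shift (hindep : iIndepFun Z P) (hident : ∀ i, IdentDistrib (Z i) (Z 0) P P)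
    (m : ℕ) : IdentDistrib (fun ω i ↦ Z (m + i) ω) (fun ω i ↦ Z i ω) P P :=
  IdentDistrib.pi (fun i ↦ (hident _).trans (hident i).symm)
    (hindep.precomp (add_right_injective m)) hindep

lemma measure_inter_eq_mul_of_disjoint (hmeas : ∀ i, Measurable (Z i)) (hindep : iIndepFun Z P)
    {S T : Set ℕ} (hST : Disjoint S T) {A B : Set Ω}
    (hA : MeasurableSet[⨆ i ∈ S, MeasurableSpace.comap (Z i) ‹_›] A)
    (hB : MeasurableSet[⨆ i ∈ T, MeasurableSpace.comap (Z i) ‹_›] B) :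
    P (A ∩ B) = P A * P B :=
  (Indep_iff _ _ _).1 (indep_iSup_of_disjoint (fun i ↦ (hmeas i).comap_le)
    ((iIndepFun_iff_iIndep _ _ _).1 hindep) hST) A B hA hB

lemma measure_sum_shift [AddCommMonoid G] [MeasurableSingletonClass G] [MeasurableAdd₂ G]
    (hindep : iIndepFun Z P) (hident : ∀ i, IdentDistrib (Z i) (Z 0) P P) (m n : ℕ) (x : G) :
    P {ω | ∑ i ∈ range n, Z (m + i) ω = x} = P {ω | ∑ i ∈ range n, Z i ω = x} :=
  (identDistrib_shift hindep hident m).measure_mem_eq (measurableSet_setOf_sum_eq n x)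

end Increments

lemma tsum_le_of_renewal {u f : ℕ → ℝ≥0∞} {q : ℝ≥0∞} (hu : ∀ n, u n ≠ ∞) (hq : q < 1)
    (hrenewal : ∀ N, 1 ≤ N → u N = ∑ k ∈ Icc 1 N, f k * u (N - k))
    (hf : ∀ M, ∑ k ∈ Icc 1 M, f k ≤ q) :
    ∑' n, u n ≤ u 0 / (1 - q) := by
  refine ENNReal.tsum_le_of_sum_range_le fun M ↦ ?_
  set T := ∑ n ∈ range M, u n
  have hshift : ∀ k ∈ Ico 1 M, ∑ N ∈ Ico k M, u (N - k) ≤ T := fun k _ ↦ by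
    rw [sum_Ico_eq_sum_range]
    simp only [Nat.add_sub_cancel_left]
    exact sum_le_sum_of_subset (range_subset_range.2 (Nat.sub_le M k))
  have hT : T ≤ u 0 + T * q := calc
    T ≤ ∑ n ∈ insert 0 (Ico 1 M), u n :=
        sum_le_sum_of_subset fun n hn ↦ by
          simp only [mem_range] at hn
          simp only [mem_insert, mem_Ico]
          omega
    _ = u 0 + ∑ N ∈ Ico 1 M, ∑ k ∈ Icc 1 N, f k * u (N - k) := by
        rw [sum_insert (by simp)]
        exact congrArg _ (sum_congr rfl fun N hN ↦ hrenewal N (mem_Ico.1 hN).1)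
    _ = u 0 + ∑ k ∈ Ico 1 M, f k * ∑ N ∈ Ico k M, u (N - k) := by
        rw [sum_comm' (t' := Ico 1 M) (s' := fun k ↦ Ico k M) fun N k ↦ by
          simp only [mem_Ico, mem_Icc]; omega]
        simp only [mul_sum]
    _ ≤ u 0 + ∑ k ∈ Ico 1 M, f k * T := by gcongr with k hk; exact hshift k hk
    _ ≤ u 0 + T * q := by
        rw [← sum_mul, mul_comm]
        gcongr
        exact (sum_le_sum_of_subset Ico_subset_Icc_self).trans (hf M)
  have hTfin : T ≠ ∞ := ENNReal.sum_ne_top.2 fun n _ ↦ hu n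
  rw [ENNReal.le_div_iff_mul_le (Or.inl (tsub_pos_of_lt hq).ne') (Or.inr (hu 0)),
    ENNReal.mul_sub fun _ _ ↦ hTfin, mul_one, tsub_le_iff_right]
  exact hT

section Renewal

variable {Ω G : Type*} [AddCommMonoid G] {Z : ℕ → Ω → G}

def returnsToZero : Set (ℕ → G) := {z | ∃ n, 1 ≤ n ∧ ∑ i ∈ range n, z i = 0}

def firstReturn (Z : ℕ → Ω → G) (k : ℕ) : Set Ω :=
  {ω | ∑ i ∈ range k, Z i ω = 0 ∧ ∀ j ∈ Ico 1 k, ∑ i ∈ range j, Z i ω ≠ 0}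

lemma disjoint_firstReturn {k k' : ℕ} (hk : 1 ≤ k) (hkk' : k < k') :
    Disjoint (firstReturn Z k) (firstReturn Z k') :=
  Set.disjoint_left.2 fun _ h h' ↦ h'.2 k (mem_Ico.2 ⟨hk, hkk'⟩) h.1

lemma pairwiseDisjoint_firstReturn (N : ℕ) :
    (↑(Icc 1 N) : Set ℕ).PairwiseDisjoint (firstReturn Z) := fun _ hk _ hk' hne ↦
  hne.lt_or_gt.elim (disjoint_firstReturn (mem_Icc.1 hk).1)
    fun h ↦ (disjoint_firstReturn (mem_Icc.1 hk').1 h).symm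

lemma setOf_sum_eq_zero_eq_biUnion {N : ℕ} (hN : 1 ≤ N) :
    {ω | ∑ i ∈ range N, Z i ω = 0} =
      ⋃ k ∈ Icc 1 N, firstReturn Z k ∩ {ω | ∑ i ∈ range (N - k), Z (k + i) ω = 0} := by
  have hsplit : ∀ k ≤ N, ∀ ω, ∑ i ∈ range N, Z i ω =
      ∑ i ∈ range k, Z i ω + ∑ i ∈ range (N - k), Z (k + i) ω := fun k hk ω ↦ by
    rw [← sum_range_add, Nat.add_sub_cancel' hk]
  classical
  ext ω
  simp only [Set.mem_ofPred_eq, Set.mem_iUnion, Set.mem_inter_iff, mem_Icc, exists_prop]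
  constructor
  · intro h
    have hex : ∃ j, 1 ≤ j ∧ ∑ i ∈ range j, Z i ω = 0 := ⟨N, hN, h⟩
    have hkN : Nat.find hex ≤ N := Nat.find_min' hex ⟨hN, h⟩
    refine ⟨Nat.find hex, ⟨(Nat.find_spec hex).1, hkN⟩, ⟨(Nat.find_spec hex).2,
      fun j hj h0 ↦ Nat.find_min hex (mem_Ico.1 hj).2 ⟨(mem_Ico.1 hj).1, h0⟩⟩, ?_⟩
    rwa [hsplit _ hkN, (Nat.find_spec hex).2, zero_add] at h
  · rintro ⟨k, ⟨-, hkN⟩, ⟨hk, -⟩, hrest⟩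
    rw [hsplit k hkN, hk, hrest, add_zero]

variable [MeasurableSpace G] [MeasurableSingletonClass G] [MeasurableAdd₂ G]

lemma measurableSet_firstReturn (k : ℕ) :
    MeasurableSet[⨆ i ∈ Set.Iio k, MeasurableSpace.comap (Z i) ‹_›] (firstReturn Z k) := by
  have hsum : ∀ j ≤ k, MeasurableSet[⨆ i ∈ Set.Iio k, MeasurableSpace.comap (Z i) ‹_›]
      {ω | ∑ i ∈ range j, Z i ω = 0} := fun j hj ↦
    measurable_sum_of_mem (fun i hi ↦ Set.mem_Iio.2 ((mem_range.1 hi).trans_le hj))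
      (measurableSet_singleton 0)
  simp only [firstReturn, Set.ofPred_and, Set.ofPred_forall]
  exact (hsum k le_rfl).inter (MeasurableSet.iInter fun j ↦ MeasurableSet.iInter fun hj ↦
    (hsum j (mem_Ico.1 hj).2.le).compl)

lemma measurableSet_returnsToZero : MeasurableSet (returnsToZero : Set (ℕ → G)) := by
  simp only [returnsToZero, Set.ofPred_exists, Set.ofPred_and]
  exact MeasurableSet.iUnion fun n ↦ (MeasurableSet.const _).inter (measurableSet_setOf_sum_eq n 0)

variable [MeasurableSpace Ω] {P : Measure Ω}

lemma measure_sum_eq_zero_eq_sum_firstReturn (hmeas : ∀ i, Measurable (Z i))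
    (hindep : iIndepFun Z P) (hident : ∀ i, IdentDistrib (Z i) (Z 0) P P) {N : ℕ} (hN : 1 ≤ N) :
    P {ω | ∑ i ∈ range N, Z i ω = 0} =
      ∑ k ∈ Icc 1 N, P (firstReturn Z k) * P {ω | ∑ i ∈ range (N - k), Z i ω = 0} := by
  have hfuture : ∀ k, MeasurableSet[⨆ i ∈ Set.Ici k, MeasurableSpace.comap (Z i) ‹_›]
      {ω | ∑ i ∈ range (N - k), Z (k + i) ω = 0} := fun k ↦
    measurable_sum_of_mem (fun i _ ↦ Set.mem_Ici.2 (Nat.le_add_right k i))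
      (measurableSet_singleton 0)
  rw [setOf_sum_eq_zero_eq_biUnion hN, measure_biUnion_finset
    ((pairwiseDisjoint_firstReturn N).mono fun k ↦ Set.inter_subset_left)
    fun k _ ↦ (iSup_comap_le hmeas _ _ (measurableSet_firstReturn k)).inter
      (iSup_comap_le hmeas _ _ (hfuture k))]
  refine sum_congr rfl fun k _ ↦ ?_
  rw [measure_inter_eq_mul_of_disjoint hmeas hindep (Set.Iio_disjoint_Ici le_rfl)
    (measurableSet_firstReturn k) (hfuture k), measure_sum_shift hindep hident]

lemma measure_returnsToZero_eq_one [IsProbabilityMeasure P] (hmeas : ∀ i, Measurable (Z i))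
    (hindep : iIndepFun Z P) (hident : ∀ i, IdentDistrib (Z i) (Z 0) P P)
    (hdiv : ∑' n, P {ω | ∑ i ∈ range n, Z i ω = 0} = ∞) :
    P ((fun ω i ↦ Z i ω) ⁻¹' returnsToZero) = 1 := by
  by_contra hne
  have hq := prob_le_one.lt_of_ne hne
  have hf : ∀ M, ∑ k ∈ Icc 1 M, P (firstReturn Z k) ≤ P ((fun ω i ↦ Z i ω) ⁻¹' returnsToZero) :=
    fun M ↦ by
      rw [← measure_biUnion_finset (pairwiseDisjoint_firstReturn M) fun k _ ↦
        iSup_comap_le hmeas _ _ (measurableSet_firstReturn k)]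
      exact measure_mono (Set.iUnion₂_subset fun k hk ω hω ↦ ⟨k, (mem_Icc.1 hk).1, hω.1⟩)
  have hbound := tsum_le_of_renewal (fun n ↦ measure_ne_top P _) hq
    (fun N hN ↦ measure_sum_eq_zero_eq_sum_firstReturn hmeas hindep hident hN) hf
  rw [hdiv, top_le_iff] at hbound
  exact ENNReal.div_ne_top (measure_ne_top P _) (tsub_pos_of_lt hq).ne' hbound

theorem ae_infinite_setOf_sum_eq_zero [IsProbabilityMeasure P] (hmeas : ∀ i, Measurable (Z i))
    (hindep : iIndepFun Z P) (hident : ∀ i, IdentDistrib (Z i) (Z 0) P P)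
    (hdiv : ∑' n, P {ω | ∑ i ∈ range n, Z i ω = 0} = ∞) :
    ∀ᵐ ω ∂P, {n | ∑ i ∈ range n, Z i ω = 0}.Infinite := by
  have hreturn : ∀ᵐ ω ∂P, ∀ m, (fun i ↦ Z (m + i) ω) ∈ returnsToZero := by
    refine ae_all_iff.2 fun m ↦ (prob_compl_eq_zero_iff
      (measurable_pi_lambda _ (fun i ↦ hmeas (m + i)) measurableSet_returnsToZero)).2 ?_
    rw [(identDistrib_shift hindep hident m).measure_mem_eq measurableSet_returnsToZero]
    exact measure_returnsToZero_eq_one hmeas hindep hident hdiv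
  filter_upwards [hreturn] with ω hω
  by_contra hfin
  obtain ⟨m, hm⟩ := (Set.not_infinite.1 hfin).exists_maximal ⟨0, by simp⟩
  obtain ⟨n, hn, hsum⟩ := hω m
  have hmn : m + n ∈ {n | ∑ i ∈ range n, Z i ω = 0} := by
    rw [Set.mem_ofPred_eq, sum_range_add, hm.1, hsum, add_zero]
  exact absurd (hm.2 hmn (by omega)) (by omega)

end Renewal

section Symmetric

variable {Ω G : Type*} [AddCommGroup G] [Countable G] [MeasurableSpace G]
  [MeasurableSingletonClass G] [MeasurableAdd₂ G] [MeasurableSpace Ω] {P : Measure Ω}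
  {Z : ℕ → Ω → G}

lemma measure_sum_eq_neg (hindep : iIndepFun Z P) (hsymm : ∀ i, IdentDistrib (-Z i) (Z i) P P)
    (n : ℕ) (x : G) :
    P {ω | ∑ i ∈ range n, Z i ω = -x} = P {ω | ∑ i ∈ range n, Z i ω = x} := by
  have hneg := (IdentDistrib.pi hsymm (hindep.comp (fun _ ↦ Neg.neg)
    fun _ ↦ measurable_of_countable _) hindep).measure_mem_eq (measurableSet_setOf_sum_eq n (-x))
  refine hneg.symm.trans (congrArg P (Set.ext fun ω ↦ ?_))
  simp [sum_neg_distrib]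

lemma measure_sum_add_self_eq_tsum_sq (hmeas : ∀ i, Measurable (Z i)) (hindep : iIndepFun Z P)
    (hident : ∀ i, IdentDistrib (Z i) (Z 0) P P) (hsymm : ∀ i, IdentDistrib (-Z i) (Z i) P P)
    (n : ℕ) :
    P {ω | ∑ i ∈ range (n + n), Z i ω = 0} = ∑' x, P {ω | ∑ i ∈ range n, Z i ω = x} ^ 2 := by
  have hsplit : {ω | ∑ i ∈ range (n + n), Z i ω = 0} = ⋃ x,
      {ω | ∑ i ∈ range n, Z i ω = x} ∩ {ω | ∑ i ∈ range n, Z (n + i) ω = -x} := by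
    ext ω
    simp only [Set.mem_ofPred_eq, Set.mem_iUnion, Set.mem_inter_iff, sum_range_add]
    exact ⟨fun h ↦ ⟨_, rfl, eq_neg_of_add_eq_zero_right h⟩,
      fun ⟨x, hx, h⟩ ↦ by rw [hx, h, add_neg_cancel]⟩
  have hpast : ∀ x, MeasurableSet[⨆ i ∈ Set.Iio n, MeasurableSpace.comap (Z i) ‹_›]
      {ω | ∑ i ∈ range n, Z i ω = x} := fun x ↦
    measurable_sum_of_mem (fun i hi ↦ Set.mem_Iio.2 (mem_range.1 hi)) (measurableSet_singleton x)
  have hfuture : ∀ x, MeasurableSet[⨆ i ∈ Set.Ici n, MeasurableSpace.comap (Z i) ‹_›]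
      {ω | ∑ i ∈ range n, Z (n + i) ω = -x} := fun x ↦
    measurable_sum_of_mem (fun i _ ↦ Set.mem_Ici.2 (Nat.le_add_right n i))
      (measurableSet_singleton (-x))
  rw [hsplit, measure_iUnion
    (fun x y hxy ↦ Set.disjoint_left.2 fun ω h h' ↦ hxy (h.1.symm.trans h'.1))
    fun x ↦ (iSup_comap_le hmeas _ _ (hpast x)).inter (iSup_comap_le hmeas _ _ (hfuture x))]
  refine tsum_congr fun x ↦ ?_
  rw [measure_inter_eq_mul_of_disjoint hmeas hindep (Set.Iio_disjoint_Ici le_rfl) (hpast x)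
    (hfuture x), measure_sum_shift hindep hident, measure_sum_eq_neg hindep hsymm, sq]

lemma sq_measureReal_sum_mem_le [IsFiniteMeasure P] (hmeas : ∀ i, Measurable (Z i))
    (hindep : iIndepFun Z P) (hident : ∀ i, IdentDistrib (Z i) (Z 0) P P)
    (hsymm : ∀ i, IdentDistrib (-Z i) (Z i) P P) (n : ℕ) (T : Finset G) :
    P.real {ω | ∑ i ∈ range n, Z i ω ∈ T} ^ 2 ≤
      #T * P.real {ω | ∑ i ∈ range (n + n), Z i ω = 0} := by
  have hcover : P.real {ω | ∑ i ∈ range n, Z i ω ∈ T} ≤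
      ∑ x ∈ T, P.real {ω | ∑ i ∈ range n, Z i ω = x} := by
    refine (measureReal_mono (fun ω hω ↦ ?_) (measure_ne_top P _)).trans
      (measureReal_biUnion_finset_le T _)
    exact Set.mem_biUnion (s := (T : Set G)) hω rfl
  have hsq : ∑ x ∈ T, P.real {ω | ∑ i ∈ range n, Z i ω = x} ^ 2 ≤
      P.real {ω | ∑ i ∈ range (n + n), Z i ω = 0} := by
    calc ∑ x ∈ T, P.real {ω | ∑ i ∈ range n, Z i ω = x} ^ 2
        = (∑ x ∈ T, P {ω | ∑ i ∈ range n, Z i ω = x} ^ 2).toReal := by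
          rw [ENNReal.toReal_sum fun _ _ ↦ ENNReal.pow_ne_top (measure_ne_top P _)]
          simp only [measureReal_def, ENNReal.toReal_pow]
      _ ≤ P.real {ω | ∑ i ∈ range (n + n), Z i ω = 0} := by
          refine ENNReal.toReal_mono (measure_ne_top P _) ?_
          rw [measure_sum_add_self_eq_tsum_sq hmeas hindep hident hsymm]
          exact ENNReal.sum_le_tsum T
  calc P.real {ω | ∑ i ∈ range n, Z i ω ∈ T} ^ 2
      ≤ (∑ x ∈ T, P.real {ω | ∑ i ∈ range n, Z i ω = x}) ^ 2 := by gcongr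
    _ ≤ #T * ∑ x ∈ T, P.real {ω | ∑ i ∈ range n, Z i ω = x} ^ 2 := sq_sum_le_card_mul_sum_sq
    _ ≤ #T * P.real {ω | ∑ i ∈ range (n + n), Z i ω = 0} := by gcongr

end Symmetric

section Lattice

variable {Ω ι : Type*} [Fintype ι] [MeasurableSpace Ω] {P : Measure Ω} [IsProbabilityMeasure P]
  {Z : ℕ → Ω → ι → ℤ}

lemma measure_le_abs_sum_apply_le (hmeas : ∀ i, Measurable (Z i)) (hindep : iIndepFun Z P)
    (hsymm : ∀ i, IdentDistrib (-Z i) (Z i) P P) (hbdd : ∀ i ω j, |Z i ω j| ≤ 1)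
    (n : ℕ) (j : ι) {c : ℝ} (hc : 0 < c) :
    P {ω | c ≤ |((∑ i ∈ range n, Z i ω) j : ℝ)|} ≤ ENNReal.ofReal (n / c ^ 2) := by
  set Y : ℕ → Ω → ℝ := fun i ω ↦ (Z i ω j : ℝ)
  have hcoord : Measurable fun v : ι → ℤ ↦ (v j : ℝ) := measurable_of_countable _
  have hYmeas : ∀ i, Measurable (Y i) := fun i ↦ hcoord.comp (hmeas i)
  have hYbdd : ∀ i ω, Y i ω ∈ Set.Icc (-1 : ℝ) 1 := fun i ω ↦ by
    simp only [Y, Set.mem_Icc]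
    exact_mod_cast abs_le.1 (hbdd i ω j)
  have hYmem : ∀ i, MemLp (Y i) 2 P := fun i ↦ MemLp.of_bound (hYmeas i).aestronglyMeasurable 1
    (ae_of_all _ fun ω ↦ by simpa [Real.norm_eq_abs, abs_le] using hYbdd i ω)
  have hYmean : ∀ i, ∫ ω, Y i ω ∂P = 0 := fun i ↦ by
    have h := ((hsymm i).comp hcoord).integral_eq
    simp only [Function.comp_def, Pi.neg_apply, Int.cast_neg, integral_neg] at h
    linarith
  have hmean : ∫ ω, (∑ i ∈ range n, Y i) ω ∂P = 0 := by
    simp only [Finset.sum_apply]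
    rw [integral_finsetSum _ fun i _ ↦ (hYmem i).integrable one_le_two]
    exact sum_eq_zero fun i _ ↦ hYmean i
  have hvar : Var[∑ i ∈ range n, Y i; P] ≤ n := by
    rw [IndepFun.variance_sum (fun i _ ↦ hYmem i)
      fun i _ k _ hik ↦ (hindep.indepFun hik).comp hcoord hcoord]
    calc ∑ i ∈ range n, Var[Y i; P] ≤ ∑ _i ∈ range n, 1 := sum_le_sum fun i _ ↦
          (variance_le_sq_of_bounded (ae_of_all _ (hYbdd i)) (hYmeas i).aemeasurable).trans
            (by norm_num)
      _ = n := by simp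
  have hcheb := meas_ge_le_variance_div_sq (memLp_finsetSum' (range n) fun i _ ↦ hYmem i) hc
  rw [hmean] at hcheb
  refine (measure_mono fun ω hω ↦ ?_).trans (hcheb.trans (ENNReal.ofReal_le_ofReal (by gcongr)))
  simpa [Y, Finset.sum_apply] using hω

lemma one_sub_le_measureReal_abs_sum_apply_le (hmeas : ∀ i, Measurable (Z i))
    (hindep : iIndepFun Z P) (hsymm : ∀ i, IdentDistrib (-Z i) (Z i) P P)
    (hbdd : ∀ i ω j, |Z i ω j| ≤ 1) (n K : ℕ) :
    1 - Fintype.card ι * n / (K + 1) ^ 2 ≤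
      P.real {ω | ∀ j, |(∑ i ∈ range n, Z i ω) j| ≤ K} := by
  set box := {ω | ∀ j, |(∑ i ∈ range n, Z i ω) j| ≤ K}
  have hbox : MeasurableSet box := by
    simp only [box, Set.ofPred_forall]
    exact MeasurableSet.iInter fun j ↦ measurableSet_le
      ((measurable_of_countable fun v : ι → ℤ ↦ |v j|).comp
        (Finset.measurable_sum _ fun i _ ↦ hmeas i)) measurable_const
  have hcompl : boxᶜ ⊆ ⋃ j, {ω | (K + 1 : ℝ) ≤ |((∑ i ∈ range n, Z i ω) j : ℝ)|} := by
    intro ω hω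
    obtain ⟨j, hj⟩ := not_forall.1 hω
    refine Set.mem_iUnion.2 ⟨j, ?_⟩
    exact_mod_cast (Int.lt_iff_add_one_le.1 (not_le.1 hj))
  have hbound : P boxᶜ ≤ ENNReal.ofReal (Fintype.card ι * n / (K + 1) ^ 2) := calc
    P boxᶜ ≤ ∑ j, P {ω | (K + 1 : ℝ) ≤ |((∑ i ∈ range n, Z i ω) j : ℝ)|} :=
        (measure_mono hcompl).trans (measure_iUnion_fintype_le P _)
    _ ≤ ∑ _j : ι, ENNReal.ofReal (n / (K + 1) ^ 2) := sum_le_sum fun j _ ↦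
        measure_le_abs_sum_apply_le hmeas hindep hsymm hbdd n j (by positivity)
    _ = ENNReal.ofReal (Fintype.card ι * n / (K + 1) ^ 2) := by
        rw [sum_const, card_univ, nsmul_eq_mul, ← ENNReal.ofReal_natCast,
          ← ENNReal.ofReal_mul (by positivity), mul_div_assoc]
  have := ENNReal.toReal_le_of_le_ofReal (by positivity) hbound
  rw [← measureReal_def, measureReal_compl hbox, probReal_univ] at this
  linarith

lemma one_div_le_measureReal_sum_add_self_eq_zero (hmeas : ∀ i, Measurable (Z i))
    (hindep : iIndepFun Z P) (hident : ∀ i, IdentDistrib (Z i) (Z 0) P P)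
    (hsymm : ∀ i, IdentDistrib (-Z i) (Z i) P P) (hbdd : ∀ i ω j, |Z i ω j| ≤ 1)
    (hcard : Fintype.card ι ≤ 2) {n : ℕ} (hn : 1 ≤ n) :
    1 / (196 * n) ≤ P.real {ω | ∑ i ∈ range (n + n), Z i ω = 0} := by
  -- Chebyshev puts `S n` in the box `[-K, K]^ι` with probability `≥ 1/2`, and the box has
  -- `(4s + 3)^d ≤ 49 n` points; Cauchy–Schwarz then gives `1/4 ≤ 49 n * P (S (2n) = 0)`.
  classical
  set s := Nat.sqrt n
  set K := 2 * s + 1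
  set T : Finset (ι → ℤ) := Fintype.piFinset fun _ ↦ Icc (-K : ℤ) K
  have hs : 1 ≤ s := Nat.le_sqrt.2 (by simpa using hn)
  have hcardT : (#T : ℝ) ≤ 49 * n := by
    have hT : #T = (4 * s + 3) ^ Fintype.card ι := by
      simp only [T, Fintype.card_piFinset, Int.card_Icc, prod_const, card_univ]
      congr 1
      omega
    have hle : (4 * s + 3) ^ Fintype.card ι ≤ 49 * n := calc
      _ ≤ (4 * s + 3) ^ 2 := Nat.pow_le_pow_right (by omega) hcard
      _ ≤ 49 * (s * s) := by nlinarith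
      _ ≤ 49 * n := by gcongr; exact Nat.sqrt_le n
    exact_mod_cast hT ▸ hle
  have hhalf : 1 / 2 ≤ P.real {ω | ∑ i ∈ range n, Z i ω ∈ T} := by
    have hset : {ω | ∑ i ∈ range n, Z i ω ∈ T} = {ω | ∀ j, |(∑ i ∈ range n, Z i ω) j| ≤ K} := by
      ext ω
      simp [T, Fintype.mem_piFinset, abs_le]
    have hratio : (Fintype.card ι : ℝ) * n / ((K : ℕ) + 1) ^ 2 ≤ 1 / 2 := by
      have hcard' : (Fintype.card ι : ℝ) ≤ 2 := by exact_mod_cast hcard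
      have hn' : (n : ℝ) ≤ (s + 1) * (s + 1) := by exact_mod_cast (Nat.lt_succ_sqrt n).le
      rw [div_le_iff₀ (by positivity)]
      push_cast [K]
      nlinarith
    rw [hset]
    linarith [one_sub_le_measureReal_abs_sum_apply_le hmeas hindep hsymm hbdd n K]
  have hCS := sq_measureReal_sum_mem_le hmeas hindep hident hsymm n T
  have hsq : (1 / 2 : ℝ) ^ 2 ≤ P.real {ω | ∑ i ∈ range n, Z i ω ∈ T} ^ 2 :=
    pow_le_pow_left₀ (by norm_num) hhalf 2
  have hu : 0 ≤ P.real {ω | ∑ i ∈ range (n + n), Z i ω = 0} := measureReal_nonneg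
  rw [div_le_iff₀ (by positivity)]
  nlinarith [mul_le_mul_of_nonneg_right hcardT hu]

lemma tsum_ofReal_one_div_mul_succ_eq_top {c : ℝ} (hc : 0 < c) :
    ∑' n : ℕ, ENNReal.ofReal (1 / (c * (n + 1 : ℕ))) = ∞ := by
  by_contra h
  have hsum : Summable fun n : ℕ ↦ 1 / (c * (n + 1 : ℕ)) :=
    (ENNReal.summable_toReal h).congr fun n ↦ ENNReal.toReal_ofReal (by positivity)
  refine Real.not_summable_one_div_natCast
    ((summable_nat_add_iff 1).1 ((hsum.mul_left c).congr fun n ↦ ?_))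
  field_simp

lemma tsum_measure_sum_eq_zero_eq_top (hmeas : ∀ i, Measurable (Z i))
    (hindep : iIndepFun Z P) (hident : ∀ i, IdentDistrib (Z i) (Z 0) P P)
    (hsymm : ∀ i, IdentDistrib (-Z i) (Z i) P P) (hbdd : ∀ i ω j, |Z i ω j| ≤ 1)
    (hcard : Fintype.card ι ≤ 2) :
    ∑' n, P {ω | ∑ i ∈ range n, Z i ω = 0} = ∞ := by
  have hlow : ∀ n : ℕ, ENNReal.ofReal (1 / (196 * (n + 1 : ℕ))) ≤
      P {ω | ∑ i ∈ range ((n + 1) + (n + 1)), Z i ω = 0} := fun n ↦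
    ENNReal.ofReal_le_of_le_toReal (one_div_le_measureReal_sum_add_self_eq_zero hmeas hindep hident
      hsymm hbdd hcard (Nat.le_add_left 1 n))
  refine top_unique ((tsum_ofReal_one_div_mul_succ_eq_top (by norm_num)).symm.le.trans
    ((ENNReal.tsum_le_tsum hlow).trans (ENNReal.tsum_comp_le_tsum_of_injective
      (f := fun n ↦ (n + 1) + (n + 1)) (fun a b h ↦ by simp only at h; omega) _)))

end Lattice

section SimpleRandomWalk

variable {Ω : Type*} {d : ℕ} {Z : ℕ → Ω → Fin d → ℤ}

lemma abs_apply_le_one_of_eq_single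
    (hval : ∀ i ω, ∃ j : Fin d, Z i ω = Pi.single j 1 ∨ Z i ω = -Pi.single j 1)
    (i : ℕ) (ω : Ω) (j : Fin d) : |Z i ω j| ≤ 1 := by
  obtain ⟨k, hk | hk⟩ := hval i ω <;>
    · rw [hk]
      by_cases hjk : j = k <;> simp [hjk]

variable [MeasurableSpace Ω] {P : Measure Ω}

lemma measure_eq_ite_of_uniform
    (hval : ∀ i ω, ∃ j : Fin d, Z i ω = Pi.single j 1 ∨ Z i ω = -Pi.single j 1)
    (hunif : ∀ i (j : Fin d),
      P {ω | Z i ω = Pi.single j 1} = 1 / (2 * (d : ℝ≥0∞)) ∧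
      P {ω | Z i ω = -Pi.single j 1} = 1 / (2 * (d : ℝ≥0∞)))
    (i : ℕ) (v : Fin d → ℤ) :
    P {ω | Z i ω = v} =
      if ∃ j, v = Pi.single j 1 ∨ v = -Pi.single j 1 then 1 / (2 * (d : ℝ≥0∞)) else 0 := by
  split_ifs with hv
  · obtain ⟨j, rfl | rfl⟩ := hv
    exacts [(hunif i j).1, (hunif i j).2]
  · refine measure_eq_zero_iff_ae_notMem.2 (ae_of_all _ fun ω (hω : Z i ω = v) ↦ hv ?_)
    simpa [hω] using hval i ω

lemma identDistrib_of_uniform (hmeas : ∀ i, Measurable (Z i))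
    (hval : ∀ i ω, ∃ j : Fin d, Z i ω = Pi.single j 1 ∨ Z i ω = -Pi.single j 1)
    (hunif : ∀ i (j : Fin d),
      P {ω | Z i ω = Pi.single j 1} = 1 / (2 * (d : ℝ≥0∞)) ∧
      P {ω | Z i ω = -Pi.single j 1} = 1 / (2 * (d : ℝ≥0∞)))
    (i : ℕ) : IdentDistrib (Z i) (Z 0) P P :=
  identDistrib_of_measure_eq (hmeas i) (hmeas 0) fun v ↦ by
    rw [measure_eq_ite_of_uniform hval hunif, measure_eq_ite_of_uniform hval hunif]

lemma identDistrib_neg_of_uniform (hmeas : ∀ i, Measurable (Z i))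
    (hval : ∀ i ω, ∃ j : Fin d, Z i ω = Pi.single j 1 ∨ Z i ω = -Pi.single j 1)
    (hunif : ∀ i (j : Fin d),
      P {ω | Z i ω = Pi.single j 1} = 1 / (2 * (d : ℝ≥0∞)) ∧
      P {ω | Z i ω = -Pi.single j 1} = 1 / (2 * (d : ℝ≥0∞)))
    (i : ℕ) : IdentDistrib (-Z i) (Z i) P P :=
  identDistrib_of_measure_eq (hmeas i).neg (hmeas i) fun v ↦ by
    simp only [Pi.neg_apply, neg_eq_iff_eq_neg]
    rw [measure_eq_ite_of_uniform hval hunif, measure_eq_ite_of_uniform hval hunif]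
    simp only [neg_eq_iff_eq_neg, neg_neg, or_comm]

end SimpleRandomWalk

end RandomWalk

open RandomWalk in
/-- **Pólya's theorem, recurrent case.** The simple random walk on `ℤ^d`
(steps i.i.d. uniform on the `2d` unit coordinate vectors `±e_j`) is recurrent
for `d = 1, 2`: almost surely it returns to the origin infinitely often. -/
theorem polya_recurrent
    {Ω : Type*} [MeasurableSpace Ω] (P : Measure Ω) [IsProbabilityMeasure P]
    (d : ℕ) (hd : d = 1 ∨ d = 2)
    (Z : ℕ → Ω → (Fin d → ℤ))
    (hmeas : ∀ i, Measurable (Z i))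
    (hindep : iIndepFun Z P)
    (hval : ∀ i ω, ∃ j : Fin d, Z i ω = Pi.single j 1 ∨ Z i ω = -Pi.single j 1)
    (hunif : ∀ i (j : Fin d),
      P {ω | Z i ω = Pi.single j 1} = 1 / (2 * (d : ENNReal)) ∧
      P {ω | Z i ω = -Pi.single j 1} = 1 / (2 * (d : ENNReal)))
    (X : ℕ → Ω → (Fin d → ℤ))
    (hX : ∀ n ω, X n ω = ∑ i ∈ Finset.range n, Z i ω) :
    ∀ᵐ ω ∂P, {n : ℕ | X n ω = 0}.Infinite := by
  have hident := identDistrib_of_uniform hmeas hval hunif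
  have hdiv := tsum_measure_sum_eq_zero_eq_top hmeas hindep hident
    (identDistrib_neg_of_uniform hmeas hval hunif) (abs_apply_le_one_of_eq_single hval)
    (by rcases hd with rfl | rfl <;> simp)
  simpa only [hX] using ae_infinite_setOf_sum_eq_zero hmeas hindep hident hdiv
end

section
/- (Annealed mean duration of a left excursion) Consider a uniformly elliptic i.i.d. random environment (p_x)_{x∈ℤ} with E(ln ρ_0) < 0, so that the walk is transient to +∞. Let τ_1 = inf{n ≥ 0 : X_n = 1} and define the quenched mean excursion duration ω_1 = 1 + E^ω_0(τ_1), the quenched expected duration of a left excursion from site 1. Then: if E(ρ_0) < 1 one has E(ω_1) = 2/(1 - E(ρ_0)), and if E(ρ_0) ≥ 1 one has E(ω_1) = ∞. -/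
open MeasureTheory ProbabilityTheory Filter

/-- One-step transition probability of the nearest-neighbour walk in the
environment `pω`. -/
noncomputable def rwreStep (pω : ℤ → ℝ) (x y : ℤ) : ℝ :=
  if y = x + 1 then pω x else if y = x - 1 then 1 - pω x else 0

/-- The hitting time of site `x` by the path `f`, as an extended nonnegative
real (equal to `∞` if the site is never visited). -/
noncomputable def rwreHitTime (x : ℤ) (f : ℕ → ℤ) : ENNReal :=
  ⨅ (n : ℕ) (_ : f n = x), (n : ENNReal)

/-!
Write `h(x) = E^ω_x τ₁ = ∑ₙ P^ω_x(τ₁ > n)`. By first-step analysis `h(1) = 0` and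
`h(x) = 1 + p_x h(x+1) + q_x h(x-1)` for `x ≤ 0`, and `h` is the minimal nonnegative solution.
The increments `e(x) = h(x) - h(x+1) = E^ω_x τ_{x+1}` satisfy `p_x e(x) = 1 + q_x e(x-1)`, whose
minimal solution is `e(x) = ∑ₖ ρ_x ⋯ ρ_{x-k+1} / p_{x-k}`: summing these increments gives a solution
bounding `h` from above, and iterating the recursion from `h(x+1) ≤ h(x)` bounds `h(0) = e(0)` from
below.
Since `1/p = 1 + ρ`, `1 + E^ω_0 τ₁ = 2 ∑ₖ ρ₀ρ₋₁⋯ρ₋ₖ₊₁`. The ρ's are i.i.d., so the annealed mean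
of the `k`-th term is `(Eρ₀)^k`, and summing the geometric series gives the result.
-/

open scoped ENNReal
open Finset

namespace RWRE

lemma ne_top_of_add_eq_one {a b : ℝ≥0∞} (h : a + b = 1) : a ≠ ⊤ ∧ b ≠ ⊤ :=
  ENNReal.add_ne_top.1 (h ▸ ENNReal.one_ne_top)

section FirstPassage

variable (p q : ℤ → ℝ≥0∞)

/-- `P_x(τ₁ > n)` for the walk stepping right with probability `p` and left with probability `q`. -/
noncomputable def survival : ℕ → ℤ → ℝ≥0∞
  | 0, x => if x = 1 then 0 else 1
  | n + 1, x => if x = 1 then 0 else p x * survival n (x + 1) + q x * survival n (x - 1)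

noncomputable def meanHitTime (x : ℤ) : ℝ≥0∞ := ∑' n, survival p q n x

variable {p q}

@[simp] lemma survival_one (n : ℕ) : survival p q n 1 = 0 := by
  cases n <;> simp [survival]

lemma survival_zero_of_ne {x : ℤ} (hx : x ≠ 1) : survival p q 0 x = 1 := by
  simp [survival, hx]

lemma survival_succ_of_ne (n : ℕ) {x : ℤ} (hx : x ≠ 1) :
    survival p q (n + 1) x = p x * survival p q n (x + 1) + q x * survival p q n (x - 1) := by
  simp [survival, hx]

@[simp] lemma meanHitTime_one : meanHitTime p q 1 = 0 := by
  simp [meanHitTime]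

lemma meanHitTime_eq {x : ℤ} (hx : x ≠ 1) :
    meanHitTime p q x = 1 + p x * meanHitTime p q (x + 1) + q x * meanHitTime p q (x - 1) := by
  rw [meanHitTime, tsum_eq_zero_add' ENNReal.summable, survival_zero_of_ne hx]
  simp_rw [survival_succ_of_ne _ hx]
  rw [ENNReal.tsum_add, ENNReal.tsum_mul_left, ENNReal.tsum_mul_left, add_assoc]
  rfl

lemma meanHitTime_le_of_supersolution (h : ℤ → ℝ≥0∞)
    (hh : ∀ x ≤ 0, 1 + p x * h (x + 1) + q x * h (x - 1) ≤ h x) {x : ℤ} (hx : x ≤ 1) :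
    meanHitTime p q x ≤ h x := by
  refine ENNReal.tsum_le_of_sum_range_le fun N => ?_
  induction N generalizing x with
  | zero => simp
  | succ N ih =>
    rcases eq_or_lt_of_le hx with rfl | hx
    · simp
    rw [sum_range_succ', survival_zero_of_ne (x := x) (by omega)]
    simp_rw [survival_succ_of_ne _ (by omega : x ≠ 1)]
    rw [sum_add_distrib, ← mul_sum, ← mul_sum]
    calc _ ≤ p x * h (x + 1) + q x * h (x - 1) + 1 := by
          gcongr <;> exact ih (by omega)
      _ ≤ h x := by rw [add_comm, ← add_assoc]; exact hh x (by omega)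

variable (p q) in
/-- The `k`-th term of the series for `e(x) = E_x τ_{x+1}`. -/
noncomputable def stepTerm (x : ℤ) (k : ℕ) : ℝ≥0∞ :=
  (∏ j ∈ range k, q (x - j) / p (x - j)) * (p (x - k))⁻¹

variable (p q) in
noncomputable def stepTime (x : ℤ) : ℝ≥0∞ := ∑' k, stepTerm p q x k

lemma stepTerm_zero (x : ℤ) : stepTerm p q x 0 = (p x)⁻¹ := by
  simp [stepTerm]

lemma stepTerm_succ (x : ℤ) (k : ℕ) :
    stepTerm p q x (k + 1) = q x / p x * stepTerm p q (x - 1) k := by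
  simp only [stepTerm, prod_range_succ', Nat.cast_add, Nat.cast_one, Nat.cast_zero, sub_zero,
    ← sub_sub, sub_right_comm x 1]
  ring

lemma sum_range_succ_stepTerm (x : ℤ) (K : ℕ) :
    ∑ k ∈ range (K + 1), stepTerm p q x k
      = (p x)⁻¹ + q x / p x * ∑ k ∈ range K, stepTerm p q (x - 1) k := by
  rw [sum_range_succ', stepTerm_zero, mul_sum, add_comm]
  simp only [stepTerm_succ]

lemma stepTime_eq (x : ℤ) : stepTime p q x = (p x)⁻¹ + q x / p x * stepTime p q (x - 1) := by
  rw [stepTime, tsum_eq_zero_add' ENNReal.summable, stepTerm_zero, stepTime,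
    ← ENNReal.tsum_mul_left]
  simp only [stepTerm_succ]

variable (hpq : ∀ x, p x + q x = 1)
include hpq

/-- Sites two apart share the neighbour `y`, which is what lets the comparison pass through the
first-step recursion despite the different transition probabilities at `y + 1` and `y - 1`. -/
lemma survival_add_one_le_sub_one (n : ℕ) :
    ∀ y : ℤ, y ≤ 0 → survival p q n (y + 1) ≤ survival p q n (y - 1) := by
  induction n with
  | zero =>
    intro y hy
    rw [survival_zero_of_ne (by omega : y - 1 ≠ 1)]
    unfold survival; split_ifs <;> simp
  | succ n ih =>
    intro y hy
    rcases eq_or_lt_of_le hy with rfl | hy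
    · simp
    have h₁ : survival p q n (y + 2) ≤ survival p q n y := by
      simpa [add_assoc] using ih (y + 1) (by omega)
    have h₂ : survival p q n y ≤ survival p q n (y - 2) := by
      simpa [sub_sub] using ih (y - 1) (by omega)
    calc survival p q (n + 1) (y + 1)
        = p (y + 1) * survival p q n (y + 2) + q (y + 1) * survival p q n y := by
          rw [survival_succ_of_ne _ (by omega), add_assoc, add_sub_cancel_right]; rfl
      _ ≤ (p (y + 1) + q (y + 1)) * survival p q n y := by rw [add_mul]; gcongr
      _ = (p (y - 1) + q (y - 1)) * survival p q n y := by rw [hpq, hpq]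
      _ ≤ p (y - 1) * survival p q n y + q (y - 1) * survival p q n (y - 2) := by
          rw [add_mul]; gcongr
      _ = survival p q (n + 1) (y - 1) := by
          rw [survival_succ_of_ne _ (by omega), sub_add_cancel, sub_sub]; rfl

lemma survival_add_one_le_succ (n : ℕ) {x : ℤ} (hx : x ≤ 0) :
    survival p q n (x + 1) ≤ survival p q (n + 1) x := by
  rw [survival_succ_of_ne _ (by omega)]
  calc survival p q n (x + 1) = (p x + q x) * survival p q n (x + 1) := by rw [hpq, one_mul]
    _ ≤ p x * survival p q n (x + 1) + q x * survival p q n (x - 1) := by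
      rw [add_mul]; gcongr; exact survival_add_one_le_sub_one hpq n x hx

lemma one_add_meanHitTime_add_one_le {x : ℤ} (hx : x ≤ 0) :
    1 + meanHitTime p q (x + 1) ≤ meanHitTime p q x := by
  unfold meanHitTime
  rw [tsum_eq_zero_add' (f := fun n => survival p q n x) ENNReal.summable,
    survival_zero_of_ne (by omega)]
  gcongr with n
  exact survival_add_one_le_succ hpq n hx

variable (hp : ∀ x, p x ≠ 0)
include hp

lemma mul_inv_add_div_mul (x : ℤ) (a : ℝ≥0∞) :
    p x * ((p x)⁻¹ + q x / p x * a) = 1 + q x * a := by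
  rw [mul_add, ENNReal.mul_inv_cancel (hp x) ((ne_top_of_add_eq_one (hpq x)).1), ← mul_assoc,
    ENNReal.mul_div_cancel (hp x) ((ne_top_of_add_eq_one (hpq x)).1)]

lemma inv_eq_one_add_div (x : ℤ) : (p x)⁻¹ = 1 + q x / p x := by
  rw [← ENNReal.div_self (hp x) ((ne_top_of_add_eq_one (hpq x)).1), ← ENNReal.add_div, hpq, one_div]

lemma mul_stepTime (x : ℤ) : p x * stepTime p q x = 1 + q x * stepTime p q (x - 1) := by
  rw [stepTime_eq, mul_inv_add_div_mul hpq hp]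

lemma meanHitTime_zero_le_stepTime : meanHitTime p q 0 ≤ stepTime p q 0 := by
  set E : ℤ → ℝ≥0∞ := fun y => ∑ i ∈ Icc y 0, stepTime p q i
  have hE : ∀ y ≤ 0, E y = stepTime p q y + E (y + 1) := fun y hy => by
    show ∑ i ∈ Icc y 0, _ = _ + ∑ i ∈ Icc (y + 1) 0, _
    rw [← insert_Icc_add_one_left_eq_Icc hy, sum_insert (by simp)]
  have hsuper : ∀ x ≤ 0, 1 + p x * E (x + 1) + q x * E (x - 1) ≤ E x := fun x hx => by
    rw [hE (x - 1) (by omega), sub_add_cancel, hE x hx]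
    apply le_of_eq
    calc 1 + p x * E (x + 1) + q x * (stepTime p q (x - 1) + (stepTime p q x + E (x + 1)))
        = (1 + q x * stepTime p q (x - 1)) + q x * stepTime p q x + (p x + q x) * E (x + 1) := by
          ring
      _ = stepTime p q x + E (x + 1) := by
          rw [← mul_stepTime hpq hp, ← add_mul, hpq, one_mul, one_mul]
  simpa [E] using meanHitTime_le_of_supersolution E hsuper (x := 0) (by omega)

lemma meanHitTime_add_sum_stepTerm_le (K : ℕ) :
    ∀ x ≤ 0, meanHitTime p q (x + 1) + ∑ k ∈ range K, stepTerm p q x k ≤ meanHitTime p q x := by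
  induction K with
  | zero =>
    exact fun x hx => by simpa using le_add_self.trans (one_add_meanHitTime_add_one_le hpq hx)
  | succ K ih =>
    intro x hx
    set M := meanHitTime p q
    set T := ∑ k ∈ range K, stepTerm p q (x - 1) k
    rw [sum_range_succ_stepTerm]
    by_cases hM : M x = ⊤
    · simp [hM]
    obtain ⟨hp_top, hq_top⟩ := ne_top_of_add_eq_one (hpq x)
    have hT : M x + T ≤ M (x - 1) := by simpa using ih (x - 1) (by omega)
    have key : p x * M (x + 1) + (1 + q x * T) ≤ p x * M x := by
      refine ENNReal.le_of_add_le_add_right (ENNReal.mul_ne_top hq_top hM) ?_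
      calc p x * M (x + 1) + (1 + q x * T) + q x * M x
          = 1 + p x * M (x + 1) + q x * (M x + T) := by ring
        _ ≤ 1 + p x * M (x + 1) + q x * M (x - 1) := by gcongr
        _ = M x := (meanHitTime_eq (by omega)).symm
        _ = p x * M x + q x * M x := by rw [← add_mul, hpq, one_mul]
    rwa [← ENNReal.mul_le_mul_iff_right (hp x) hp_top, mul_add,
      mul_inv_add_div_mul hpq hp]

lemma meanHitTime_zero_eq_stepTime : meanHitTime p q 0 = stepTime p q 0 := by
  refine le_antisymm (meanHitTime_zero_le_stepTime hpq hp)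
    (ENNReal.tsum_le_of_sum_range_le fun K => ?_)
  simpa using meanHitTime_add_sum_stepTerm_le hpq hp K 0 le_rfl

theorem one_add_meanHitTime_zero :
    1 + meanHitTime p q 0 = 2 * ∑' k : ℕ, ∏ j ∈ range k, q (-j) / p (-j) := by
  set π : ℕ → ℝ≥0∞ := fun k => ∏ j ∈ range k, q (-j) / p (-j)
  have hterm : ∀ k, stepTerm p q 0 k = π k + π (k + 1) := fun k => by
    simp [π, stepTerm, inv_eq_one_add_div hpq hp, mul_add, prod_range_succ]
  have hshift : ∑' k, π k = 1 + ∑' k, π (k + 1) := by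
    simpa [π] using tsum_eq_zero_add' (f := π) ENNReal.summable
  rw [meanHitTime_zero_eq_stepTime hpq hp, stepTime, tsum_congr hterm, ENNReal.tsum_add, two_mul,
    hshift]
  ring

end FirstPassage

lemma rwreHitTime_eq_tsum (y : ℤ) (f : ℕ → ℤ) :
    rwreHitTime y f = ∑' n : ℕ, {f : ℕ → ℤ | ∀ i ≤ n, f i ≠ y}.indicator 1 f := by
  classical
  by_cases hhit : ∃ m, f m = y
  · have hτ : rwreHitTime y f = Nat.find hhit :=
      le_antisymm (iInf₂_le (Nat.find hhit) (Nat.find_spec hhit))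
        (le_iInf₂ fun n hn => Nat.cast_le.2 (Nat.find_min' hhit hn))
    simp only [hτ, Set.indicator_apply, Set.mem_ofPred_eq, ← Nat.lt_find_iff hhit, Pi.one_apply]
    rw [tsum_eq_sum (s := range (Nat.find hhit)) (fun n hn => by simpa using hn),
      sum_ite_of_true fun n hn => mem_range.1 hn]
    simp
  · simp only [not_exists] at hhit
    have hτ : rwreHitTime y f = ⊤ := by simp [rwreHitTime, hhit]
    simp [hτ, hhit]

lemma lintegral_rwreHitTime (μ : Measure (ℕ → ℤ)) (y : ℤ) :
    ∫⁻ f, rwreHitTime y f ∂μ = ∑' n : ℕ, μ {f | ∀ i ≤ n, f i ≠ y} := by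
  have hmeas : ∀ n, MeasurableSet {f : ℕ → ℤ | ∀ i ≤ n, f i ≠ y} := fun n =>
    measurableSet_setOfPred.2 (by fun_prop)
  simp_rw [rwreHitTime_eq_tsum]
  rw [lintegral_tsum fun n => (measurable_one.indicator (hmeas n)).aemeasurable]
  simp [lintegral_indicator_one (hmeas _)]

lemma rwreStep_nonneg {w : ℤ → ℝ} (hw : ∀ y, w y ∈ Set.Icc (0 : ℝ) 1) (y z : ℤ) :
    0 ≤ rwreStep w y z := by
  unfold rwreStep
  split_ifs <;> linarith [(hw y).1, (hw y).2]

section Paths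

variable (w : ℤ → ℝ)

noncomputable def pathProb {n : ℕ} (γ : Fin (n + 1) → ℤ) : ℝ≥0∞ :=
  ∏ i : Fin n, ENNReal.ofReal (rwreStep w (γ i.castSucc) (γ i.succ))

lemma ofReal_rwreStep (x y : ℤ) :
    ENNReal.ofReal (rwreStep w x y) = (if y = x + 1 then ENNReal.ofReal (w x) else 0)
      + (if y = x - 1 then ENNReal.ofReal (1 - w x) else 0) := by
  unfold rwreStep
  split_ifs <;> first | omega | simp

lemma pathProb_cons {n : ℕ} (x : ℤ) (δ : Fin (n + 1) → ℤ) :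
    pathProb w (Fin.cons x δ : Fin (n + 2) → ℤ)
      = ENNReal.ofReal (rwreStep w x (δ 0)) * pathProb w δ := by
  simp [pathProb, Fin.prod_univ_succ]

lemma tsum_pathProb_eq_survival (n : ℕ) (x : ℤ) :
    ∑' γ : Fin (n + 1) → ℤ, (if γ 0 = x ∧ ∀ i, γ i ≠ 1 then pathProb w γ else 0)
      = survival (fun y => ENNReal.ofReal (w y)) (fun y => ENNReal.ofReal (1 - w y)) n x := by
  induction n generalizing x with
  | zero =>
    rw [← (Equiv.funUnique (Fin 1) ℤ).symm.tsum_eq]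
    by_cases hx : x = 1
    · simp [survival, hx]
    rw [tsum_eq_single x (fun c hc => by simp [hc])]
    simp [pathProb, survival, hx]
  | succ n ih =>
    by_cases hx : x = 1
    · subst hx
      simpa [survival] using fun γ h₀ h => absurd h₀ (h 0)
    rw [← (Fin.consEquiv fun _ => ℤ).tsum_eq, ENNReal.tsum_prod',
      tsum_eq_single x (fun z hz => by simp [hz]), survival_succ_of_ne _ hx, ← ih, ← ih,
      ← ENNReal.tsum_mul_left, ← ENNReal.tsum_mul_left, ← ENNReal.tsum_add]
    refine tsum_congr fun δ => ?_
    have hcons : (∀ i, (Fin.cons x δ : Fin (n + 2) → ℤ) i ≠ 1) ↔ ∀ i, δ i ≠ 1 := by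
      rw [Fin.forall_fin_succ]; simp [hx]
    rw [show (Fin.consEquiv fun _ => ℤ) (x, δ) = Fin.cons x δ from rfl, Fin.cons_zero]
    simp only [true_and, hcons, pathProb_cons]
    by_cases hδ : ∀ i, δ i ≠ 1
    · simp only [hδ, ne_eq, not_false_eq_true, implies_true, and_true, if_true,
        ofReal_rwreStep, add_mul]
      split_ifs <;> first | omega | simp
    · simp [hδ]

variable {w} (hw : ∀ y, w y ∈ Set.Icc (0 : ℝ) 1) (μ : Measure (ℕ → ℤ)) (x : ℤ)
  (hμ : ∀ (n : ℕ) (γ : ℕ → ℤ), μ {f | ∀ i ≤ n, f i = γ i} =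
    ENNReal.ofReal ((if γ 0 = x then 1 else 0) * ∏ i ∈ range n, rwreStep w (γ i) (γ (i + 1))))
include hw hμ

lemma measure_preimage_restrict_singleton {n : ℕ} (γ : Fin (n + 1) → ℤ) :
    μ ((fun (f : ℕ → ℤ) (i : Fin (n + 1)) => f i) ⁻¹' {γ})
      = if γ 0 = x then pathProb w γ else 0 := by
  have hclamp : ∀ i (hi : i ≤ n), Fin.clamp i n = ⟨i, Nat.lt_succ_of_le hi⟩ :=
    fun i hi => Fin.ext (min_eq_left hi)
  have hcyl : (fun (f : ℕ → ℤ) (i : Fin (n + 1)) => f i) ⁻¹' {γ}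
      = {f | ∀ i ≤ n, f i = γ (Fin.clamp i n)} := by
    ext f
    simp only [Set.mem_preimage, Set.mem_singleton_iff, funext_iff, Fin.forall_iff,
      Nat.lt_succ_iff, Set.mem_ofPred_eq]
    exact forall₂_congr fun i hi => by rw [hclamp i hi]
  have hcast : ∀ i : Fin n, Fin.clamp i n = i.castSucc := fun i => Fin.ext (min_eq_left i.is_le')
  have hsucc : ∀ i : Fin n, Fin.clamp (i + 1) n = i.succ := fun i => Fin.ext (min_eq_left i.is_lt)
  rw [hcyl, hμ, ENNReal.ofReal_mul (by positivity),
    ENNReal.ofReal_prod_of_nonneg fun i _ => rwreStep_nonneg hw _ _, pathProb,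
    ← Fin.prod_univ_eq_prod_range (fun i => ENNReal.ofReal (rwreStep w _ _)),
    show Fin.clamp 0 n = 0 from rfl]
  simp_rw [hcast, hsucc]
  split_ifs <;> simp

lemma measure_avoid_eq_survival (n : ℕ) :
    μ {f | ∀ i ≤ n, f i ≠ 1}
      = survival (fun y => ENNReal.ofReal (w y)) (fun y => ENNReal.ofReal (1 - w y)) n x := by
  set r : (ℕ → ℤ) → Fin (n + 1) → ℤ := fun f i => f i
  set S : Set (Fin (n + 1) → ℤ) := {γ | ∀ i, γ i ≠ 1}
  have hr : {f : ℕ → ℤ | ∀ i ≤ n, f i ≠ 1} = r ⁻¹' S := by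
    ext f; simp [r, S, Fin.forall_iff]
  rw [hr, ← tsum_measure_preimage_singleton S.to_countable
    fun γ _ => (measurable_pi_lambda _ fun i => measurable_pi_apply _) (measurableSet_singleton γ),
    ← tsum_pathProb_eq_survival, tsum_subtype S fun γ => μ (r ⁻¹' {γ})]
  refine tsum_congr fun γ => ?_
  simp only [Set.indicator_apply, measure_preimage_restrict_singleton hw μ x hμ, S, r]
  split_ifs <;> simp_all

theorem lintegral_rwreHitTime_eq_meanHitTime :
    ∫⁻ f, rwreHitTime 1 f ∂μ
      = meanHitTime (fun y => ENNReal.ofReal (w y)) (fun y => ENNReal.ofReal (1 - w y)) x := by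
  rw [lintegral_rwreHitTime, meanHitTime]
  exact tsum_congr (measure_avoid_eq_survival hw μ x hμ)

end Paths

theorem one_add_lintegral_rwreHitTime {w : ℤ → ℝ} (hw : ∀ y, w y ∈ Set.Ioo (0 : ℝ) 1)
    (μ : Measure (ℕ → ℤ))
    (hμ : ∀ (n : ℕ) (γ : ℕ → ℤ), μ {f | ∀ i ≤ n, f i = γ i} =
      ENNReal.ofReal ((if γ 0 = 0 then 1 else 0) * ∏ i ∈ range n, rwreStep w (γ i) (γ (i + 1)))) :
    1 + ∫⁻ f, rwreHitTime 1 f ∂μ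
      = 2 * ∑' k : ℕ, ∏ j ∈ range k, ENNReal.ofReal ((1 - w (-j)) / w (-j)) := by
  have hpq : ∀ y, ENNReal.ofReal (w y) + ENNReal.ofReal (1 - w y) = 1 := fun y => by
    rw [← ENNReal.ofReal_add (hw y).1.le (by linarith [(hw y).2]), add_sub_cancel,
      ENNReal.ofReal_one]
  rw [lintegral_rwreHitTime_eq_meanHitTime (fun y => Set.Ioo_subset_Icc_self (hw y)) μ 0 hμ,
    one_add_meanHitTime_zero hpq fun y => ENNReal.ofReal_ne_zero_iff.2 (hw y).1]
  simp_rw [ENNReal.ofReal_div_of_pos (hw _).1]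

lemma odds_nonneg {t : ℝ} (ht : t ∈ Set.Ioo (0 : ℝ) 1) : 0 ≤ (1 - t) / t :=
  div_nonneg (by linarith [ht.2]) ht.1.le

lemma lintegral_ofReal_odds {Ω : Type*} [MeasurableSpace Ω] {P : Measure Ω} [IsFiniteMeasure P]
    {X : Ω → ℝ} (hX : Measurable X) (hval : ∀ ω, X ω ∈ Set.Ioo (0 : ℝ) 1)
    (hlow : ∃ δ > (0 : ℝ), ∀ᵐ ω ∂P, δ ≤ X ω) :
    ∫⁻ ω, ENNReal.ofReal ((1 - X ω) / X ω) ∂P = ENNReal.ofReal (∫ ω, (1 - X ω) / X ω ∂P) := by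
  obtain ⟨δ, hδ, hlow⟩ := hlow
  have hbound : ∀ᵐ ω ∂P, ‖(1 - X ω) / X ω‖ ≤ δ⁻¹ := by
    filter_upwards [hlow] with ω hω
    rw [Real.norm_eq_abs, abs_of_nonneg (odds_nonneg (hval ω)), ← one_div]
    exact div_le_div₀ zero_le_one (by linarith [(hval ω).1]) hδ hω
  have hint : Integrable (fun ω => (1 - X ω) / X ω) P :=
    (integrable_const δ⁻¹).mono' ((measurable_const.sub hX).div hX).aestronglyMeasurable hbound
  exact (ofReal_integral_eq_lintegral_ofReal hint (ae_of_all _ fun ω => odds_nonneg (hval ω))).symm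

lemma lintegral_prod_eq_pow {Ω ι : Type*} [MeasurableSpace Ω] {P : Measure Ω}
    {X : ι → Ω → ℝ≥0∞} (hX : iIndepFun X P) (hmeas : ∀ i, Measurable (X i)) {c : ℝ≥0∞}
    (hc : ∀ i, ∫⁻ ω, X i ω ∂P = c) (s : Finset ι) :
    ∫⁻ ω, ∏ i ∈ s, X i ω ∂P = c ^ s.card := by
  simp [lintegral_prod_eq_prod_lintegral_of_indepFun s X hX hmeas, hc]

lemma two_mul_tsum_geometric_ofReal {a : ℝ} (ha₀ : 0 ≤ a) (ha : a < 1) :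
    2 * ∑' k : ℕ, ENNReal.ofReal a ^ k = ENNReal.ofReal (2 / (1 - a)) := by
  rw [ENNReal.tsum_geometric, ← ENNReal.ofReal_one, ← ENNReal.ofReal_sub _ ha₀,
    ← ENNReal.ofReal_inv_of_pos (by linarith), ← ENNReal.ofReal_ofNat 2,
    ← ENNReal.ofReal_mul zero_le_two, div_eq_mul_inv]

end RWRE

open RWRE

theorem rwre_annealed_left_excursion_duration_general
    {Ω : Type*} [MeasurableSpace Ω] (P : Measure Ω) [IsProbabilityMeasure P]
    (p : ℤ → Ω → ℝ)
    (hmeas : ∀ x, Measurable (p x))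
    (hval : ∀ x ω, p x ω ∈ Set.Ioo (0 : ℝ) 1)
    (hindep : iIndepFun p P)
    (hident : ∀ x, IdentDistrib (p x) (p 0) P P)
    (hellip : ∃ δ > (0 : ℝ), ∀ᵐ ω ∂P, δ ≤ p 0 ω ∧ p 0 ω ≤ 1 - δ)
    (Pq : Ω → ℤ → Measure (ℕ → ℤ))
    (hPq : ∀ (ω : Ω) (z : ℤ) (n : ℕ) (γ : ℕ → ℤ),
      Pq ω z {f | ∀ i ≤ n, f i = γ i} =
        ENNReal.ofReal ((if γ 0 = z then 1 else 0) *
          ∏ i ∈ Finset.range n, rwreStep (fun x => p x ω) (γ i) (γ (i + 1))))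
    (Eρ : ℝ) (hEρ : Eρ = ∫ ω, (1 - p 0 ω) / p 0 ω ∂P)
    (excursion : Ω → ENNReal)
    (hexc : ∀ ω, excursion ω = 1 + ∫⁻ f, rwreHitTime 1 f ∂(Pq ω 0)) :
    (Eρ < 1 → ∫⁻ ω, excursion ω ∂P = ENNReal.ofReal (2 / (1 - Eρ))) ∧
    (1 ≤ Eρ → ∫⁻ ω, excursion ω ∂P = ⊤) := by
  set odds : ℝ → ℝ≥0∞ := fun t => ENNReal.ofReal ((1 - t) / t)
  have hodds : Measurable odds := by fun_prop
  set ρ : ℤ → Ω → ℝ≥0∞ := fun z => odds ∘ p z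
  have hρ_meas : ∀ z, Measurable (ρ z) := fun z => hodds.comp (hmeas z)
  have hEρ_nonneg : 0 ≤ Eρ := hEρ ▸ integral_nonneg fun ω => odds_nonneg (hval 0 ω)
  have hρ_mean : ∀ z, ∫⁻ ω, ρ z ω ∂P = ENNReal.ofReal Eρ := fun z => by
    obtain ⟨δ, hδ, hlow⟩ := hellip
    rw [((hident z).comp hodds).lintegral_eq, hEρ]
    exact lintegral_ofReal_odds (hmeas 0) (hval 0) ⟨δ, hδ, hlow.mono fun ω h => h.1⟩
  have hquenched : ∀ ω, excursion ω = 2 * ∑' k : ℕ, ∏ j ∈ Finset.range k, ρ (-j) ω := fun ω =>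
    (hexc ω).trans (one_add_lintegral_rwreHitTime (hval · ω) (Pq ω 0) (hPq ω 0))
  have hannealed : ∫⁻ ω, excursion ω ∂P = 2 * ∑' k : ℕ, ENNReal.ofReal Eρ ^ k := by
    simp_rw [hquenched]
    rw [lintegral_const_mul _ (by fun_prop), lintegral_tsum fun k => by fun_prop]
    congr 1
    refine tsum_congr fun k => ?_
    have hρ_indep : iIndepFun (fun j : ℕ => ρ (-j)) P :=
      (hindep.comp _ fun _ => hodds).precomp (neg_injective.comp Nat.cast_injective)
    simpa using lintegral_prod_eq_pow hρ_indep (fun j => hρ_meas _) (fun j => hρ_mean _) (range k)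
  refine ⟨fun h => hannealed.trans (two_mul_tsum_geometric_ofReal hEρ_nonneg h), fun h => ?_⟩
  rw [hannealed, ENNReal.tsum_geometric, tsub_eq_zero_of_le (ENNReal.one_le_ofReal.2 h),
    ENNReal.inv_zero, ENNReal.mul_top two_ne_zero]

/-- **Annealed mean duration of a left excursion.**
For a uniformly elliptic i.i.d. environment with `E (log ρ₀) < 0` (so the walk
is transient to `+∞`), let `ω₁ = 1 + E^ω₀(τ₁)` be the quenched mean duration
of a left excursion from site `1` (`τ₁` the hitting time of `1` from `0`).
Then `E ω₁ = 2/(1 - E ρ₀)` if `E ρ₀ < 1`, and `E ω₁ = ∞` if `E ρ₀ ≥ 1`. -/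
theorem rwre_annealed_left_excursion_duration
    {Ω : Type*} [MeasurableSpace Ω] (P : Measure Ω) [IsProbabilityMeasure P]
    (p : ℤ → Ω → ℝ)
    (hmeas : ∀ x, Measurable (p x))
    (hval : ∀ x ω, p x ω ∈ Set.Ioo (0 : ℝ) 1)
    (hindep : iIndepFun p P)
    (hident : ∀ x, IdentDistrib (p x) (p 0) P P)
    (hellip : ∃ δ > (0 : ℝ), ∀ᵐ ω ∂P, δ ≤ p 0 ω ∧ p 0 ω ≤ 1 - δ)
    (Pq : Ω → ℤ → Measure (ℕ → ℤ))
    [∀ ω z, IsProbabilityMeasure (Pq ω z)]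
    (hPq : ∀ (ω : Ω) (z : ℤ) (n : ℕ) (γ : ℕ → ℤ),
      Pq ω z {f | ∀ i ≤ n, f i = γ i} =
        ENNReal.ofReal ((if γ 0 = z then 1 else 0) *
          ∏ i ∈ Finset.range n, rwreStep (fun x => p x ω) (γ i) (γ (i + 1))))
    (hlog : ∫ ω, Real.log ((1 - p 0 ω) / p 0 ω) ∂P < 0)
    (Eρ : ℝ) (hEρ : Eρ = ∫ ω, (1 - p 0 ω) / p 0 ω ∂P)
    (excursion : Ω → ENNReal)
    (hexc : ∀ ω, excursion ω = 1 + ∫⁻ f, rwreHitTime 1 f ∂(Pq ω 0)) :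
    (Eρ < 1 → ∫⁻ ω, excursion ω ∂P = ENNReal.ofReal (2 / (1 - Eρ))) ∧
    (1 ≤ Eρ → ∫⁻ ω, excursion ω ∂P = ⊤) :=
  rwre_annealed_left_excursion_duration_general P p hmeas hval hindep hident hellip Pq hPq Eρ hEρ
    excursion hexc
end

section
/- (Current as expected net crossings) Let G be a finite connected graph with symmetric positive conductances C_xy = C_yx > 0, C_x = Σ_y C_xy, and random walk transitions P_xy = C_xy / C_x. Fix distinct vertices a and b, and let u : V → ℝ be the function with u harmonic at every x ∉ {a, b}, u(b) = 0, normalized so that the total current out of a equals 1: Σ_y C_ay (u(a) - u(y)) = 1. For an edge xy define the current i_xy = C_xy (u(x) - u(y)). Then for every edge xy, i_xy equals the expected value, for the walk started at a and stopped at the hitting time T_b of b, of the number of transitions from x to y minus the number of transitions from y to x. -/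
/-!
Let `Q` be the transition matrix of the walk killed at `b`. The expected number of crossings
`x → y` before `T_b` is `G x * P x y`, where `G x = ∑ₙ (Qⁿ) a x` is the Green function of the
killed walk. Symmetry of the conductances turns the harmonicity of `u` and the normalisation of
its flux into the left equation `ν (1 - Q) = δ_a` for `ν x = C_x u x`. The maximum principle makes
`1 - Q` invertible and `u` nonnegative; the first gives uniqueness, the second bounds the partial
sums of the Green series by `ν`, so `G = ν`. The net expected crossing count is then
`C_x u x P x y - C_y u y P y x = C x y (u x - u y)`.
-/

open MeasureTheory ProbabilityTheory Filter

/-- The number of transitions of the path `f` from `x` to `y` strictly before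
the hitting time of `b`: `#{n < T_b : f n = x, f (n+1) = y}`. -/
noncomputable def transitionCount {V : Type*} (b : V) (f : ℕ → V) (x y : V) : ℕ :=
  {n : ℕ | (∀ m ≤ n, f m ≠ b) ∧ f n = x ∧ f (n + 1) = y}.ncard

namespace Matrix

variable {V : Type*} [Fintype V] [DecidableEq V]

noncomputable def greenFunction (Q : Matrix V V ℝ) (a x : V) : ℝ := ∑' n, (Q ^ n) a x

theorem sum_range_pow_apply_le {Q : Matrix V V ℝ} (hQ : ∀ x y, 0 ≤ Q x y) {ν : V → ℝ}
    (hν : 0 ≤ ν) {a : V} (hνQ : ν ᵥ* (1 - Q) = Pi.single a 1) (N : ℕ) (x : V) :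
    ∑ n ∈ Finset.range N, (Q ^ n) a x ≤ ν x := by
  have htele : Pi.single a 1 ᵥ* ∑ n ∈ Finset.range N, Q ^ n = ν - ν ᵥ* Q ^ N := by
    rw [← hνQ, vecMul_vecMul, mul_neg_geom_sum, vecMul_sub, vecMul_one]
  have hrow := congrFun htele x
  rw [single_one_vecMul, row_apply, sum_apply] at hrow
  rw [hrow, Pi.sub_apply, sub_le_self_iff]
  exact Finset.sum_nonneg fun z _ => mul_nonneg (hν z) (pow_apply_nonneg hQ N z x)

theorem greenFunction_vecMul_one_sub {Q : Matrix V V ℝ} {a : V}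
    (hsum : ∀ x, Summable fun n => (Q ^ n) a x) :
    greenFunction Q a ᵥ* (1 - Q) = Pi.single a 1 := by
  ext y
  have hshift : greenFunction Q a y = (1 : Matrix V V ℝ) a y + (greenFunction Q a ᵥ* Q) y := by
    rw [greenFunction, (hsum y).tsum_eq_zero_add, pow_zero]
    simp only [vecMul, dotProduct, greenFunction, pow_succ, mul_apply]
    rw [Summable.tsum_finsetSum fun z _ => (hsum z).mul_right _]
    simp only [tsum_mul_right]
  rw [vecMul_sub, vecMul_one, Pi.sub_apply, hshift, one_apply, Pi.single_apply]
  simp [eq_comm]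

theorem greenFunction_eq_of_vecMul_one_sub_eq {Q : Matrix V V ℝ} (hQ : ∀ x y, 0 ≤ Q x y)
    (hunit : IsUnit (1 - Q)) {ν : V → ℝ} (hν : 0 ≤ ν) {a : V}
    (hνQ : ν ᵥ* (1 - Q) = Pi.single a 1) :
    (∀ x, Summable fun n => (Q ^ n) a x) ∧ greenFunction Q a = ν := by
  have hsum : ∀ x, Summable fun n => (Q ^ n) a x := fun x =>
    summable_of_sum_range_le (fun n => pow_apply_nonneg hQ n a x)
      (sum_range_pow_apply_le hQ hν hνQ · x)
  refine ⟨hsum, vecMul_injective_iff_isUnit.mpr hunit ?_⟩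
  exact (greenFunction_vecMul_one_sub hsum).trans hνQ.symm

end Matrix

section MaximumPrinciple

variable {V : Type*} [Fintype V] {P : V → V → ℝ}

theorem eq_of_subharmonic_of_forall_le (hP : ∀ x y, 0 ≤ P x y) {x : V} (hx : ∑ y, P x y = 1)
    {f : V → ℝ} {M : ℝ} (hM : ∀ y, f y ≤ M) (hfx : f x = M) (hsub : f x ≤ ∑ y, P x y * f y)
    {y : V} (hxy : 0 < P x y) : f y = M := by
  have hgap : ∑ z, P x z * (M - f z) = 0 := by
    have : ∑ z, P x z * (M - f z) = M - ∑ z, P x z * f z := by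
      simp only [mul_sub, Finset.sum_sub_distrib, ← Finset.sum_mul, hx, one_mul]
    exact le_antisymm (by linarith)
      (Finset.sum_nonneg fun z _ => mul_nonneg (hP x z) (by linarith [hM z]))
  have hy := (Finset.sum_eq_zero_iff_of_nonneg fun z _ =>
    mul_nonneg (hP x z) (by linarith [hM z])).mp hgap y (Finset.mem_univ y)
  linarith [(mul_eq_zero.mp hy).resolve_left hxy.ne']

variable {b : V}

theorem nonpos_of_subharmonic (hP : ∀ x y, 0 ≤ P x y) (hsum : ∀ x, x ≠ b → ∑ y, P x y = 1)
    (hconn : ∀ x, ∃ (m : ℕ) (γ : ℕ → V), γ 0 = x ∧ γ m = b ∧ ∀ i < m, 0 < P (γ i) (γ (i + 1)))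
    {f : V → ℝ} (hb : f b ≤ 0)
    (hsub : ∀ x, x ≠ b → f x ≤ ∑ y, P x y * f y) (x : V) : f x ≤ 0 := by
  obtain ⟨x₀, -, hx₀⟩ := Finset.exists_max_image Finset.univ f ⟨x, Finset.mem_univ x⟩
  have hM : ∀ y, f y ≤ f x₀ := fun y => hx₀ y (Finset.mem_univ y)
  suffices f x₀ ≤ 0 from (hM x).trans this
  by_contra! hpos
  obtain ⟨m, γ, hγ0, hγm, hγ⟩ := hconn x₀
  have hmax : ∀ i ≤ m, f (γ i) = f x₀ := by
    intro i
    induction i with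
    | zero => intro _; rw [hγ0]
    | succ i ih =>
      intro hi
      have hγi := ih (by omega)
      have hγib : γ i ≠ b := fun h => by rw [h] at hγi; linarith
      exact eq_of_subharmonic_of_forall_le hP (hsum _ hγib) hM hγi (hsub _ hγib)
        (hγ i (by omega))
  have := hmax m le_rfl
  rw [hγm] at this
  linarith

theorem eq_zero_of_harmonic (hP : ∀ x y, 0 ≤ P x y) (hsum : ∀ x, x ≠ b → ∑ y, P x y = 1)
    (hconn : ∀ x, ∃ (m : ℕ) (γ : ℕ → V), γ 0 = x ∧ γ m = b ∧ ∀ i < m, 0 < P (γ i) (γ (i + 1)))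
    {f : V → ℝ} (hb : f b = 0)
    (harm : ∀ x, x ≠ b → f x = ∑ y, P x y * f y) (x : V) : f x = 0 := by
  refine le_antisymm (nonpos_of_subharmonic hP hsum hconn hb.le (fun x hx => (harm x hx).le) x) ?_
  have := nonpos_of_subharmonic hP hsum hconn (f := -f) (by simp [hb])
    (fun x hx => by simp [harm x hx]) x
  simpa using this

end MaximumPrinciple

section KilledWalk

open Matrix

variable {V : Type*} [DecidableEq V]

/-- Row and column `b` are cleared: for `a ≠ b`, `(killedMatrix P b ^ n) a x` is the probability
that the walk from `a` is at `x` at time `n` without having visited `b`. -/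
def killedMatrix (P : V → V → ℝ) (b : V) : Matrix V V ℝ :=
  of fun x y => if x = b ∨ y = b then 0 else P x y

variable {P : V → V → ℝ} {b : V}

theorem killedMatrix_nonneg (hP : ∀ x y, 0 ≤ P x y) (x y : V) : 0 ≤ killedMatrix P b x y := by
  simp only [killedMatrix, of_apply]
  split_ifs
  exacts [le_rfl, hP x y]

variable [Fintype V]

theorem pow_killedMatrix_apply_right_eq_zero {a : V} (hab : a ≠ b) (n : ℕ) :
    (killedMatrix P b ^ n) a b = 0 := by
  cases n with
  | zero => simp [hab]
  | succ n => simp [pow_succ, mul_apply, killedMatrix]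

theorem isUnit_one_sub_killedMatrix (hP : ∀ x y, 0 ≤ P x y) (hsum : ∀ x, x ≠ b → ∑ y, P x y = 1)
    (hconn : ∀ x, ∃ (m : ℕ) (γ : ℕ → V), γ 0 = x ∧ γ m = b ∧ ∀ i < m, 0 < P (γ i) (γ (i + 1))) :
    IsUnit (1 - killedMatrix P b) := by
  rw [← mulVec_injective_iff_isUnit]
  intro h₁ h₂ heq
  set h := h₁ - h₂
  have hfix : ∀ x, h x = if x = b then 0 else ∑ y, (if y = b then 0 else P x y) * h y := by
    intro x
    have := congrFun (show (1 - killedMatrix P b) *ᵥ h = 0 by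
      rw [mulVec_sub, heq, sub_self]) x
    rw [sub_mulVec, one_mulVec, Pi.sub_apply, Pi.zero_apply, sub_eq_zero] at this
    rw [this]
    by_cases hx : x = b <;> simp [mulVec, dotProduct, killedMatrix, hx]
  have hb : h b = 0 := by simpa using hfix b
  have harm : ∀ x, x ≠ b → h x = ∑ y, P x y * h y := by
    intro x hx
    rw [hfix x, if_neg hx]
    exact Finset.sum_congr rfl fun y _ => by by_cases hy : y = b <;> simp [hy, hb]
  exact sub_eq_zero.mp (funext (eq_zero_of_harmonic hP hsum hconn hb harm))

end KilledWalk

theorem integral_ncard_setOf_mem {Ω : Type*} [MeasurableSpace Ω] {μ : Measure Ω}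
    {A : ℕ → Set Ω} (hA : ∀ n, MeasurableSet (A n)) (hfin : ∑' n, μ (A n) ≠ ⊤) :
    Integrable (fun ω => ({n | ω ∈ A n}.ncard : ℝ)) μ ∧
      ∫ ω, ({n | ω ∈ A n}.ncard : ℝ) ∂μ = ∑' n, μ.real (A n) := by
  set F : Ω → ENNReal := fun ω => ∑' n, (A n).indicator 1 ω
  have hF : Measurable F := Measurable.tsum fun n => measurable_one.indicator (hA n)
  have hcount : ∀ ω, ({n | ω ∈ A n}.ncard : ℝ) = (F ω).toReal := by
    intro ω
    have hencard : F ω = ({n | ω ∈ A n}.encard : ENNReal) := by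
      rw [← ENNReal.tsum_set_one, tsum_subtype {n | ω ∈ A n} fun _ => (1 : ENNReal)]
      congr 1
    rw [hencard]
    -- `ncard` and `ENNReal.toReal` both send an infinite count to `0`.
    rcases Set.finite_or_infinite {n | ω ∈ A n} with hfinite | hinf
    · rw [← hfinite.cast_ncard_eq, ENat.toENNReal_coe, ENNReal.toReal_natCast]
    · rw [hinf.ncard, hinf.encard_eq, ENat.toENNReal_top, ENNReal.toReal_top, Nat.cast_zero]
  have hlint : ∫⁻ ω, F ω ∂μ = ∑' n, μ (A n) := by
    rw [lintegral_tsum fun n => (measurable_one.indicator (hA n)).aemeasurable]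
    exact tsum_congr fun n => lintegral_indicator_one (hA n)
  simp only [hcount]
  refine ⟨integrable_toReal_of_lintegral_ne_top hF.aemeasurable (hlint ▸ hfin), ?_⟩
  rw [integral_toReal hF.aemeasurable (ae_lt_top hF (hlint ▸ hfin)), hlint,
    ENNReal.tsum_toReal_eq fun n => ne_top_of_le_ne_top hfin (ENNReal.le_tsum n)]
  rfl

section PathMeasure

open Preorder

variable {V : Type*} [DecidableEq V] [MeasurableSpace V]

def IsMarkovPathMeasure (P : V → V → ℝ) (z : V) (μ : Measure (ℕ → V)) : Prop :=
  ∀ (n : ℕ) (γ : ℕ → V), μ {f | ∀ i ≤ n, f i = γ i} =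
    ENNReal.ofReal ((if γ 0 = z then 1 else 0) * ∏ i ∈ Finset.range n, P (γ i) (γ (i + 1)))

variable {P : V → V → ℝ} {z : V} {μ : Measure (ℕ → V)}

theorem IsMarkovPathMeasure.measure_cylinder_inter_succ (hμ : IsMarkovPathMeasure P z μ)
    (hP : ∀ x y, 0 ≤ P x y) (n : ℕ) (g : ℕ → V) (y : V) :
    μ ({f | ∀ i ≤ n, f i = g i} ∩ {f | f (n + 1) = y}) =
      μ {f | ∀ i ≤ n, f i = g i} * ENNReal.ofReal (P (g n) y) := by
  set g' := Function.update g (n + 1) y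
  have hg' : ∀ i ≤ n, g' i = g i := fun i hi => Function.update_of_ne (by omega) _ _
  have hg'y : g' (n + 1) = y := Function.update_self _ _ _
  have hcyl : {f | ∀ i ≤ n, f i = g i} ∩ {f | f (n + 1) = y} =
      {f : ℕ → V | ∀ i ≤ n + 1, f i = g' i} := by
    ext f
    simp only [Set.mem_inter_iff, Set.mem_ofPred_eq]
    constructor
    · rintro ⟨hf, rfl⟩ i hi
      rcases Nat.le_succ_iff.mp hi with hi | rfl
      · rw [hg' i hi, hf i hi]
      · exact hg'y.symm
    · intro hf
      exact ⟨fun i hi => (hf i (by omega)).trans (hg' i hi),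
        (hf (n + 1) le_rfl).trans hg'y⟩
  have hprod : ∏ i ∈ Finset.range n, P (g' i) (g' (i + 1)) =
      ∏ i ∈ Finset.range n, P (g i) (g (i + 1)) :=
    Finset.prod_congr rfl fun i hi => by
      rw [Finset.mem_range] at hi
      rw [hg' i hi.le, hg' (i + 1) hi]
  rw [hcyl, hμ, hμ, Finset.prod_range_succ, ← mul_assoc, ENNReal.ofReal_mul, hg' 0 n.zero_le,
    hprod, hg' n le_rfl, hg'y]
  · exact mul_nonneg (by split_ifs <;> norm_num)
      (Finset.prod_nonneg fun i _ => hP _ _)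

variable [MeasurableSingletonClass V] [Fintype V]

theorem IsMarkovPathMeasure.map_restrict_transition (hμ : IsMarkovPathMeasure P z μ)
    (hP : ∀ x y, 0 ≤ P x y) (n : ℕ) (x y : V) :
    (μ.restrict {f | f n = x ∧ f (n + 1) = y}).map (frestrictLe n) =
      ENNReal.ofReal (P x y) • (μ.restrict {f | f n = x}).map (frestrictLe n) := by
  refine Measure.ext_of_singleton fun γ => ?_
  have hx : MeasurableSet {f : ℕ → V | f n = x} := by measurability
  have hxy : MeasurableSet {f : ℕ → V | f n = x ∧ f (n + 1) = y} := by measurability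
  rw [Measure.smul_apply, Measure.map_apply (measurable_frestrictLe n) (measurableSet_singleton γ),
    Measure.map_apply (measurable_frestrictLe n) (measurableSet_singleton γ),
    Measure.restrict_apply' hxy, Measure.restrict_apply' hx, smul_eq_mul]
  by_cases h : ∃ g : ℕ → V, frestrictLe n g = γ ∧ g n = x
  · obtain ⟨g, rfl, rfl⟩ := h
    have hfib : frestrictLe (π := fun _ => V) n ⁻¹' {frestrictLe n g} =
        {f | ∀ i ≤ n, f i = g i} := by
      ext f
      simp [funext_iff]
    have hcyl : {f : ℕ → V | ∀ i ≤ n, f i = g i} ⊆ {f | f n = g n} := fun f hf => hf n le_rfl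
    rw [hfib, Set.inter_eq_left.mpr hcyl, mul_comm,
      ← hμ.measure_cylinder_inter_succ hP]
    congr 1
    ext f
    simp +contextual
  · simp only [not_exists, not_and] at h
    have hempty : frestrictLe (π := fun _ => V) n ⁻¹' {γ} ∩ {f | f n = x} = ∅ :=
      Set.eq_empty_of_forall_notMem fun f ⟨hf, hfx⟩ => h f hf hfx
    rw [hempty, measure_empty, mul_zero]
    refine measure_mono_null (fun f hf => ?_) (measure_empty (μ := μ))
    rw [← hempty]
    exact ⟨hf.1, hf.2.1⟩

theorem IsMarkovPathMeasure.measure_avoid_crossing (hμ : IsMarkovPathMeasure P z μ)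
    (hP : ∀ x y, 0 ≤ P x y) (b : V) (n : ℕ) (x y : V) :
    μ {f | (∀ m ≤ n, f m ≠ b) ∧ f n = x ∧ f (n + 1) = y} =
      ENNReal.ofReal (P x y) * μ {f | (∀ m ≤ n, f m ≠ b) ∧ f n = x} := by
  set S : Set (Finset.Iic n → V) := {γ | ∀ i, γ i ≠ b}
  have hS : MeasurableSet S := S.to_countable.measurableSet
  have hx : MeasurableSet {f : ℕ → V | f n = x} := by measurability
  have hxy : MeasurableSet {f : ℕ → V | f n = x ∧ f (n + 1) = y} := by measurability
  have h := DFunLike.congr_fun (hμ.map_restrict_transition hP n x y) S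
  rw [Measure.smul_apply, Measure.map_apply (measurable_frestrictLe n) hS,
    Measure.map_apply (measurable_frestrictLe n) hS, Measure.restrict_apply' hxy,
    Measure.restrict_apply' hx, smul_eq_mul] at h
  have hpre : frestrictLe n ⁻¹' S = {f | ∀ m ≤ n, f m ≠ b} := by ext f; simp [S]
  rw [hpre, ← Set.ofPred_and, ← Set.ofPred_and] at h
  exact h

theorem IsMarkovPathMeasure.measure_avoid {a b : V} (hμ : IsMarkovPathMeasure P a μ)
    (hP : ∀ x y, 0 ≤ P x y) (hab : a ≠ b) (n : ℕ) (x : V) :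
    μ {f | (∀ m ≤ n, f m ≠ b) ∧ f n = x} = ENNReal.ofReal ((killedMatrix P b ^ n) a x) := by
  have hb : ∀ n, μ {f | (∀ m ≤ n, f m ≠ b) ∧ f n = b} =
      ENNReal.ofReal ((killedMatrix P b ^ n) a b) := fun n => by
    rw [pow_killedMatrix_apply_right_eq_zero hab, ENNReal.ofReal_zero]
    exact measure_mono_null (fun f hf => hf.1 n le_rfl hf.2) measure_empty
  induction n generalizing x with
  | zero =>
    rcases eq_or_ne x b with rfl | hxb
    · exact hb 0
    have hset : {f : ℕ → V | (∀ m ≤ 0, f m ≠ b) ∧ f 0 = x} =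
        {f | ∀ i ≤ 0, f i = (fun _ => x) i} := by
      ext f
      simp only [Set.mem_ofPred_eq, nonpos_iff_eq_zero, forall_eq]
      exact ⟨And.right, fun hf => ⟨hf ▸ hxb, hf⟩⟩
    rw [hset, hμ 0, pow_zero, Matrix.one_apply]
    simp [eq_comm]
  | succ n ih =>
    rcases eq_or_ne x b with rfl | hxb
    · exact hb (n + 1)
    have hunion : {f : ℕ → V | (∀ m ≤ n + 1, f m ≠ b) ∧ f (n + 1) = x} =
        ⋃ w, {f | (∀ m ≤ n, f m ≠ b) ∧ f n = w ∧ f (n + 1) = x} := by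
      ext f
      simp only [Set.mem_ofPred_eq, Set.mem_iUnion]
      constructor
      · rintro ⟨hf, hfx⟩
        exact ⟨f n, fun m hm => hf m (by omega), rfl, hfx⟩
      · rintro ⟨w, hf, -, hfx⟩
        refine ⟨fun m hm => ?_, hfx⟩
        rcases Nat.le_succ_iff.mp hm with hm | rfl
        exacts [hf m hm, hfx ▸ hxb]
    have hdisj : Pairwise (Function.onFun Disjoint
        fun w => {f : ℕ → V | (∀ m ≤ n, f m ≠ b) ∧ f n = w ∧ f (n + 1) = x}) :=
      fun w w' hne => Set.disjoint_left.mpr fun f hf hf' => hne (hf.2.1.symm.trans hf'.2.1)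
    rw [hunion, measure_iUnion hdisj (fun w => by measurability), tsum_fintype,
      Finset.sum_congr rfl fun w _ => by
        rw [hμ.measure_avoid_crossing hP, ih w, ← ENNReal.ofReal_mul (hP _ _)],
      ← ENNReal.ofReal_sum_of_nonneg fun w _ => mul_nonneg (hP _ _)
      (Matrix.pow_apply_nonneg (killedMatrix_nonneg hP) n a w), pow_succ, Matrix.mul_apply]
    refine congrArg ENNReal.ofReal (Finset.sum_congr rfl fun w _ => ?_)
    by_cases hwb : w = b
    · simp [hwb, pow_killedMatrix_apply_right_eq_zero hab]
    · simp [killedMatrix, hwb, hxb, mul_comm]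

theorem IsMarkovPathMeasure.integral_transitionCount {a b : V} (hμ : IsMarkovPathMeasure P a μ)
    (hP : ∀ x y, 0 ≤ P x y) (hab : a ≠ b)
    (hsum : ∀ x, Summable fun n => (killedMatrix P b ^ n) a x) (x y : V) :
    Integrable (fun f => (transitionCount b f x y : ℝ)) μ ∧
      ∫ f, (transitionCount b f x y : ℝ) ∂μ =
        Matrix.greenFunction (killedMatrix P b) a x * P x y := by
  set A : ℕ → Set (ℕ → V) := fun n => {f | (∀ m ≤ n, f m ≠ b) ∧ f n = x ∧ f (n + 1) = y}
  have hnonneg : ∀ n, 0 ≤ (killedMatrix P b ^ n) a x * P x y := fun n =>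
    mul_nonneg (Matrix.pow_apply_nonneg (killedMatrix_nonneg hP) n a x) (hP x y)
  have hA : ∀ n, μ (A n) = ENNReal.ofReal ((killedMatrix P b ^ n) a x * P x y) := fun n => by
    rw [hμ.measure_avoid_crossing hP, hμ.measure_avoid hP hab, ← ENNReal.ofReal_mul (hP x y),
      mul_comm]
  have hfin : ∑' n, μ (A n) ≠ ⊤ := by
    rw [tsum_congr hA, ← ENNReal.ofReal_tsum_of_nonneg hnonneg ((hsum x).mul_right _)]
    exact ENNReal.ofReal_ne_top
  obtain ⟨hint, hintegral⟩ := integral_ncard_setOf_mem (fun n => by measurability) hfin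
  refine ⟨hint, hintegral.trans ?_⟩
  rw [tsum_congr fun n => by rw [measureReal_def, hA, ENNReal.toReal_ofReal (hnonneg n)],
    tsum_mul_right]
  rfl

end PathMeasure

section Network

open Matrix

variable {V : Type*} [Fintype V] {C : V → V → ℝ}

noncomputable def transProb (C : V → V → ℝ) (x y : V) : ℝ := C x y / ∑ z, C x z

theorem transProb_nonneg (hC : ∀ x y, 0 ≤ C x y) (x y : V) : 0 ≤ transProb C x y :=
  div_nonneg (hC x y) (Finset.sum_nonneg fun z _ => hC x z)

theorem sum_transProb {x : V} (hx : 0 < ∑ z, C x z) : ∑ y, transProb C x y = 1 := by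
  simp only [transProb, ← Finset.sum_div, div_self hx.ne']

theorem sum_conductance_pos (hC : ∀ x y, 0 ≤ C x y)
    (hconn : ∀ x y : V, ∃ (m : ℕ) (γ : ℕ → V), γ 0 = x ∧ γ m = y ∧
      ∀ i < m, 0 < C (γ i) (γ (i + 1))) {x y : V} (hxy : x ≠ y) : 0 < ∑ z, C x z := by
  obtain ⟨m, γ, hγ0, hγm, hγ⟩ := hconn x y
  have hm : 0 < m := Nat.pos_of_ne_zero fun h => hxy (by rw [← hγ0, ← hγm, h])
  have h01 := hγ 0 hm
  rw [hγ0] at h01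
  exact h01.trans_le (Finset.single_le_sum (fun z _ => hC x z) (Finset.mem_univ _))

theorem transProb_pos (hCs : ∀ x, 0 < ∑ z, C x z) {x y : V} (hxy : 0 < C x y) :
    0 < transProb C x y :=
  div_pos hxy (hCs x)

variable [DecidableEq V] {a b : V} {u : V → ℝ}

theorem sum_current_eq_ite (hCs : ∀ x, 0 < ∑ z, C x z)
    (hharm : ∀ x, x ≠ a → x ≠ b → u x = ∑ y, C x y / (∑ z, C x z) * u y)
    (hnorm : ∑ y, C a y * (u a - u y) = 1) {x : V} (hxb : x ≠ b) :
    ∑ y, C x y * (u x - u y) = if x = a then 1 else 0 := by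
  split_ifs with hxa
  · exact hxa ▸ hnorm
  · have hx := hharm x hxa hxb
    simp only [div_mul_eq_mul_div, ← Finset.sum_div] at hx
    rw [eq_div_iff (hCs x).ne'] at hx
    simp only [mul_sub, Finset.sum_sub_distrib, ← Finset.sum_mul]
    rw [← hx]
    ring

theorem potential_nonneg (hC : ∀ x y, 0 ≤ C x y) (hCs : ∀ x, 0 < ∑ z, C x z)
    (hconn : ∀ x, ∃ (m : ℕ) (γ : ℕ → V), γ 0 = x ∧ γ m = b ∧
      ∀ i < m, 0 < transProb C (γ i) (γ (i + 1)))
    (hub : u b = 0)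
    (hharm : ∀ x, x ≠ a → x ≠ b → u x = ∑ y, C x y / (∑ z, C x z) * u y)
    (hnorm : ∑ y, C a y * (u a - u y) = 1) (x : V) : 0 ≤ u x := by
  have hsub : ∀ v, v ≠ b → -u v ≤ ∑ y, transProb C v y * -u y := by
    intro v hvb
    have hflux : 0 ≤ ∑ y, C v y * (u v - u y) := by
      rw [sum_current_eq_ite hCs hharm hnorm hvb]
      split_ifs <;> norm_num
    simp only [mul_sub, Finset.sum_sub_distrib, ← Finset.sum_mul] at hflux
    have hmean : ∑ y, transProb C v y * -u y = -((∑ y, C v y * u y) / ∑ z, C v z) := by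
      simp only [transProb, Finset.sum_div, ← Finset.sum_neg_distrib]
      exact Finset.sum_congr rfl fun y _ => by ring
    rw [hmean, neg_le_neg_iff, div_le_iff₀ (hCs v)]
    linarith
  have := nonpos_of_subharmonic (transProb_nonneg hC) (fun x _ => sum_transProb (hCs x)) hconn
    (f := -u) (by simp [hub]) hsub x
  simpa using this

theorem vecMul_one_sub_killedMatrix_transProb (hsymm : ∀ x y, C x y = C y x)
    (hCs : ∀ x, 0 < ∑ z, C x z) (hab : a ≠ b) (hub : u b = 0)
    (hharm : ∀ x, x ≠ a → x ≠ b → u x = ∑ y, C x y / (∑ z, C x z) * u y)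
    (hnorm : ∑ y, C a y * (u a - u y) = 1) :
    (fun x => (∑ z, C x z) * u x) ᵥ* (1 - killedMatrix (transProb C) b) = Pi.single a 1 := by
  ext y
  rw [vecMul_sub, vecMul_one, Pi.sub_apply]
  rcases eq_or_ne y b with rfl | hyb
  · simp [vecMul, dotProduct, killedMatrix, hub, hab]
  have hQ : ((fun x => (∑ z, C x z) * u x) ᵥ* killedMatrix (transProb C) b) y =
      ∑ x, C y x * u x := by
    simp only [vecMul, dotProduct, killedMatrix, of_apply, hyb, or_false]
    refine Finset.sum_congr rfl fun x _ => ?_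
    split_ifs with hxb
    · simp [hxb, hub]
    · rw [transProb, hsymm x y]
      field_simp [(hCs x).ne']
  rw [hQ, Pi.single_apply, ← sum_current_eq_ite hCs hharm hnorm hyb]
  simp only [mul_sub, Finset.sum_sub_distrib, ← Finset.sum_mul]

end Network

theorem current_as_expected_net_crossings_general
    {V : Type*} [Fintype V] [DecidableEq V]
    [MeasurableSpace V] [MeasurableSingletonClass V]
    (C : V → V → ℝ)
    (hsymm : ∀ x y, C x y = C y x)
    (hnonneg : ∀ x y, 0 ≤ C x y)
    (hconn : ∀ x y : V, ∃ (m : ℕ) (w : ℕ → V), w 0 = x ∧ w m = y ∧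
      ∀ i < m, 0 < C (w i) (w (i + 1)))
    (K : V → Measure (ℕ → V))
    (hK : ∀ (z : V) (n : ℕ) (γ : ℕ → V),
      K z {f | ∀ i ≤ n, f i = γ i} =
        ENNReal.ofReal ((if γ 0 = z then 1 else 0) *
          ∏ i ∈ Finset.range n, C (γ i) (γ (i + 1)) / ∑ u, C (γ i) u))
    (a b : V) (hab : a ≠ b)
    (u : V → ℝ)
    (hub : u b = 0)
    (hharm : ∀ x, x ≠ a → x ≠ b → u x = ∑ y, C x y / (∑ z, C x z) * u y)
    (hnorm : ∑ y, C a y * (u a - u y) = 1) :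
    ∀ x y : V, 0 < C x y →
      C x y * (u x - u y) =
        ∫ f, ((transitionCount b f x y : ℝ) - (transitionCount b f y x : ℝ))
          ∂(K a) := by
  intro x y _
  have hCs : ∀ v, 0 < ∑ z, C v z := fun v => by
    rcases eq_or_ne v a with rfl | hva
    exacts [sum_conductance_pos hnonneg hconn hab, sum_conductance_pos hnonneg hconn hva]
  have hP := transProb_nonneg hnonneg
  have hPconn : ∀ v, ∃ (m : ℕ) (γ : ℕ → V), γ 0 = v ∧ γ m = b ∧
      ∀ i < m, 0 < transProb C (γ i) (γ (i + 1)) := fun v => by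
    obtain ⟨m, γ, hγ0, hγm, hγ⟩ := hconn v b
    exact ⟨m, γ, hγ0, hγm, fun i hi => transProb_pos hCs (hγ i hi)⟩
  have hμ : IsMarkovPathMeasure (transProb C) a (K a) := hK a
  obtain ⟨hsum, hgreen⟩ := Matrix.greenFunction_eq_of_vecMul_one_sub_eq (killedMatrix_nonneg hP)
    (isUnit_one_sub_killedMatrix hP (fun v _ => sum_transProb (hCs v)) hPconn)
    (fun v => mul_nonneg (hCs v).le (potential_nonneg hnonneg hCs hPconn hub hharm hnorm v))
    (vecMul_one_sub_killedMatrix_transProb hsymm hCs hab hub hharm hnorm)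
  obtain ⟨hint_xy, hxy_eq⟩ := hμ.integral_transitionCount hP hab hsum x y
  obtain ⟨hint_yx, hyx_eq⟩ := hμ.integral_transitionCount hP hab hsum y x
  rw [integral_sub hint_xy hint_yx, hxy_eq, hyx_eq, hgreen, transProb, transProb, hsymm y x]
  field_simp [(hCs x).ne', (hCs y).ne']

/-- **Current as expected net crossings.**
On a finite connected conductance network, let `u` be harmonic off `{a, b}`
with `u b = 0`, normalized so that the total current out of `a` is `1`. Then
for every edge `xy` the current `i_xy = C x y * (u x - u y)` equals the
expected net number of crossings of the edge from `x` to `y` by the walk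
started at `a` and stopped when it hits `b`. -/
theorem current_as_expected_net_crossings
    {V : Type*} [Fintype V] [DecidableEq V]
    [MeasurableSpace V] [MeasurableSingletonClass V]
    (C : V → V → ℝ)
    (hsymm : ∀ x y, C x y = C y x)
    (hnonneg : ∀ x y, 0 ≤ C x y)
    (hloop : ∀ x, C x x = 0)
    (hconn : ∀ x y : V, ∃ (m : ℕ) (w : ℕ → V), w 0 = x ∧ w m = y ∧
      ∀ i < m, 0 < C (w i) (w (i + 1)))
    (K : V → Measure (ℕ → V))
    [∀ z, IsProbabilityMeasure (K z)]
    (hK : ∀ (z : V) (n : ℕ) (γ : ℕ → V),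
      K z {f | ∀ i ≤ n, f i = γ i} =
        ENNReal.ofReal ((if γ 0 = z then 1 else 0) *
          ∏ i ∈ Finset.range n, C (γ i) (γ (i + 1)) / ∑ u, C (γ i) u))
    (a b : V) (hab : a ≠ b)
    (u : V → ℝ)
    (hub : u b = 0)
    (hharm : ∀ x, x ≠ a → x ≠ b → u x = ∑ y, C x y / (∑ z, C x z) * u y)
    (hnorm : ∑ y, C a y * (u a - u y) = 1) :
    ∀ x y : V, 0 < C x y →
      C x y * (u x - u y) =
        ∫ f, ((transitionCount b f x y : ℝ) - (transitionCount b f y x : ℝ))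
          ∂(K a) :=
  current_as_expected_net_crossings_general C hsymm hnonneg hconn K hK a b hab u hub hharm hnorm
end
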